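/- arXiv:1011.3699 — 9 statements merged into one kernel-verified Lean document; each statement's English description precedes it below -/
import Mathlib

section
/- Let R be a Noetherian integral domain and v a nonnegative real-valued valuation on R. Then there is no sequence (f_i)_{i≥1} of nonzero elements of R with v(f_1) > v(f_2) > v(f_3) > ⋯ strictly decreasing. -/
/-- In a Noetherian integral domain, a nonnegative real-valued valuation admits
no strictly decreasing sequence of values on nonzero elements (§1.2 of the paper). -/
theorem no_strictAnti_valuation_sequence {R : Type*} [CommRing R] [IsDomain R]
    [IsNoetherianRing R] (v : R → ℝ)
    (hmul : ∀ f g : R, f ≠ 0 → g ≠ 0 → v (f * g) = v f + v g)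
    (hadd : ∀ f g : R, f ≠ 0 → g ≠ 0 → f + g ≠ 0 → min (v f) (v g) ≤ v (f + g))
    (hnonneg : ∀ f : R, f ≠ 0 → 0 ≤ v f) :
    ¬ ∃ f : ℕ → R, (∀ i, f i ≠ 0) ∧ StrictAnti (fun i => v (f i)) := by
  rintro ⟨f, hne, hanti⟩
  -- ideals I n = { g | g = 0 ∨ v (f n) ≤ v g }
  have mem_closed : ∀ (c : ℝ), ∀ g h : R, (g = 0 ∨ c ≤ v g) → (h = 0 ∨ c ≤ v h) →
      (g + h = 0 ∨ c ≤ v (g + h)) := by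
    intro c g h hg hh
    rcases hg with rfl | hg
    · simpa using hh
    rcases hh with rfl | hh
    · simpa using Or.inr hg
    by_cases hgh : g + h = 0
    · exact Or.inl hgh
    · by_cases hg0 : g = 0
      · subst hg0; simpa using Or.inr hh
      by_cases hh0 : h = 0
      · subst hh0; simpa using Or.inr hg
      right
      exact le_trans (le_min hg hh) (hadd g h hg0 hh0 hgh)
  let I : ℕ → Ideal R := fun n =>
    { carrier := { g | g = 0 ∨ v (f n) ≤ v g }
      zero_mem' := Or.inl rfl
      add_mem' := fun {g h} hg hh => mem_closed _ g h hg hh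
      smul_mem' := by
        intro r g hg
        rcases hg with rfl | hg
        · simp
        by_cases hr : r = 0
        · simp [hr]
        by_cases hg0 : g = 0
        · simp [hg0]
        right
        rw [smul_eq_mul, hmul r g hr hg0]
        have := hnonneg r hr
        linarith }
  have hImono : Monotone I := by
    intro a b hab g hg
    rcases hg with rfl | hg
    · exact Or.inl rfl
    · exact Or.inr (le_trans (hanti.antitone hab) hg)
  obtain ⟨n, hn⟩ := monotone_stabilizes_iff_noetherian.mpr
    (inferInstance : IsNoetherian R R) ⟨I, hImono⟩
  have h1 : f (n + 1) ∈ I (n + 1) := Or.inr le_rfl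
  have h2 : f (n + 1) ∉ I n := by
    rintro (h0 | hle)
    · exact hne _ h0
    · exact absurd hle (not_le.mpr (hanti (Nat.lt_succ_self n)))
  have heq : I n = I (n + 1) := hn (n + 1) (Nat.le_succ n)
  exact h2 (heq ▸ h1)
end

section
/- Let (R,𝔪) be a Noetherian local integral domain and v a nonnegative real-valued valuation on R such that, for nonzero f ∈ R, one has v(f) > 0 if and only if f ∈ 𝔪. Then for every real M ≥ 0 the set of values {v(f) : f ∈ R∖{0}, v(f) ≤ M} is finite. In particular, the value set v(R∖{0}) is a discrete subsemigroup of ℝ_{≥0}. -/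
section Aux

open IsLocalRing

variable {R : Type*} [CommRing R] [IsDomain R]

/-- The ideal of elements of valuation at least `t` (together with `0`). -/
def vIdeal (v : R → ℝ)
    (hmul : ∀ f g : R, f ≠ 0 → g ≠ 0 → v (f * g) = v f + v g)
    (hadd : ∀ f g : R, f ≠ 0 → g ≠ 0 → f + g ≠ 0 → min (v f) (v g) ≤ v (f + g))
    (hnonneg : ∀ f : R, f ≠ 0 → 0 ≤ v f) (t : ℝ) : Ideal R where
  carrier := {f | f = 0 ∨ t ≤ v f}
  zero_mem' := Or.inl rfl
  add_mem' := by
    rintro a b ha hb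
    rcases eq_or_ne a 0 with rfl | ha0
    · simpa using hb
    rcases eq_or_ne b 0 with rfl | hb0
    · simpa using ha
    rcases eq_or_ne (a + b) 0 with h | h
    · exact Or.inl h
    · refine Or.inr (le_trans (le_min ?_ ?_) (hadd a b ha0 hb0 h))
      · exact ha.resolve_left ha0
      · exact hb.resolve_left hb0
  smul_mem' := by
    intro c x hx
    rcases eq_or_ne (c * x) 0 with h | h
    · exact Or.inl (by simpa [smul_eq_mul] using h)
    · have hc0 : c ≠ 0 := fun hc => h (by simp [hc])
      have hx0 : x ≠ 0 := fun hx' => h (by simp [hx'])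
      refine Or.inr ?_
      have := hx.resolve_left hx0
      calc t ≤ v x := this
        _ ≤ v c + v x := le_add_of_nonneg_left (hnonneg c hc0)
        _ = v (c * x) := (hmul c x hc0 hx0).symm

lemma vIdeal_mem {v : R → ℝ} {hmul hadd hnonneg} {t : ℝ} {f : R} :
    f ∈ vIdeal v hmul hadd hnonneg t ↔ f = 0 ∨ t ≤ v f := Iff.rfl

lemma vIdeal_antitone {v : R → ℝ} {hmul hadd hnonneg} {s t : ℝ} (h : s ≤ t) :
    vIdeal v hmul hadd hnonneg t ≤ vIdeal v hmul hadd hnonneg s := by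
  rintro f (rfl | hf)
  · exact Or.inl rfl
  · exact Or.inr (h.trans hf)

lemma vIdeal_mul_le {v : R → ℝ} {hmul hadd hnonneg} (s t : ℝ) :
    vIdeal v hmul hadd hnonneg s * vIdeal v hmul hadd hnonneg t ≤
      vIdeal v hmul hadd hnonneg (s + t) := by
  refine Ideal.mul_le.mpr ?_
  rintro a ha b hb
  rcases eq_or_ne a 0 with rfl | ha0
  · exact Or.inl (by simp)
  rcases eq_or_ne b 0 with rfl | hb0
  · exact Or.inl (by simp)
  exact Or.inr (by rw [hmul a b ha0 hb0]
                   exact add_le_add (ha.resolve_left ha0) (hb.resolve_left hb0))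

lemma vIdeal_pow_le {v : R → ℝ} {hmul hadd hnonneg} {I : Ideal R} {c : ℝ}
    (hI : I ≤ vIdeal v hmul hadd hnonneg c) (n : ℕ) :
    I ^ n ≤ vIdeal v hmul hadd hnonneg (n * c) := by
  induction n with
  | zero =>
      intro f _
      rcases eq_or_ne f 0 with rfl | hf
      · exact Or.inl rfl
      · exact Or.inr (by simpa using hnonneg f hf)
  | succ n ih =>
      have : I ^ (n + 1) = I ^ n * I := pow_succ I n
      rw [this]
      refine le_trans (Ideal.mul_mono ih hI) (le_trans (vIdeal_mul_le _ _) ?_)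
      refine le_of_eq ?_
      congr 1
      push_cast
      ring

end Aux

section Artinian

open IsLocalRing

attribute [local instance] Ideal.Quotient.field

/-- A finite module over a local ring annihilated by the maximal ideal is Artinian. -/
lemma isArtinian_of_torsionBy_max {R : Type*} [CommRing R] [IsLocalRing R] {M : Type*}
    [AddCommGroup M] [Module R M] [Module.Finite R M]
    (htor : Module.IsTorsionBySet R M (IsLocalRing.maximalIdeal R)) : IsArtinian R M := by
  letI := htor.module
  haveI : IsScalarTower R (R ⧸ IsLocalRing.maximalIdeal R) M := htor.isScalarTower
  haveI : Module.Finite (R ⧸ IsLocalRing.maximalIdeal R) M :=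
    Module.Finite.of_restrictScalars_finite R _ _
  haveI hart : IsArtinian (R ⧸ IsLocalRing.maximalIdeal R) M := isArtinian_of_fg_of_artinian'
  have key : ∀ (N : Submodule R M) (c : R ⧸ IsLocalRing.maximalIdeal R) (x : M),
      x ∈ N → c • x ∈ N := by
    intro N c x hx
    obtain ⟨r, rfl⟩ := Ideal.Quotient.mk_surjective c
    rw [Module.IsTorsionBySet.mk_smul htor]
    exact N.smul_mem r hx
  let e : Submodule R M ↪o Submodule (R ⧸ IsLocalRing.maximalIdeal R) M :=
    { toFun := fun N =>
        { carrier := N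
          add_mem' := fun h h' => N.add_mem h h'
          zero_mem' := N.zero_mem
          smul_mem' := fun c x hx => key N c x hx }
      inj' := by
        intro N N' h
        ext x
        exact SetLike.ext_iff.mp h x
      map_rel_iff' := Iff.rfl }
  exact ⟨e.wellFounded hart.wf⟩

/-- The quotient of a Noetherian local ring by a power of its maximal ideal is Artinian. -/
lemma isArtinian_quot_pow {R : Type*} [CommRing R] [IsLocalRing R] [IsNoetherianRing R] (n : ℕ) :
    IsArtinian R (R ⧸ (IsLocalRing.maximalIdeal R ^ n : Ideal R)) := by
  induction n with
  | zero =>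
      rw [pow_zero, Ideal.one_eq_top]
      haveI : Subsingleton (R ⧸ (⊤ : Ideal R)) :=
        Submodule.Quotient.subsingleton_iff.mpr rfl
      infer_instance
  | succ n ih =>
      set I : Ideal R := IsLocalRing.maximalIdeal R ^ (n + 1) with hI
      set J : Ideal R := IsLocalRing.maximalIdeal R ^ n with hJ
      have hIJ : I ≤ J := Ideal.pow_le_pow_right n.le_succ
      set S : Submodule R (R ⧸ I) := Submodule.map I.mkQ J with hS
      refine (isArtinian_iff_submodule_quotient S).mpr ⟨?_, ?_⟩
      · haveI : Module.Finite R S := Module.Finite.iff_fg.mpr (IsNoetherian.noetherian S)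
        refine isArtinian_of_torsionBy_max ?_
        rintro ⟨x, hx⟩ ⟨a, ha⟩
        obtain ⟨y, hy, rfl⟩ := hx
        apply Subtype.ext
        show a • (I.mkQ y) = 0
        rw [← map_smul]
        apply (Submodule.Quotient.mk_eq_zero _).mpr
        show a * y ∈ IsLocalRing.maximalIdeal R ^ (n + 1)
        rw [pow_succ, mul_comm a y]
        exact Ideal.mul_mem_mul hy (SetLike.mem_coe.mp ha)
      · exact isArtinian_of_linearEquiv (Submodule.quotientQuotientEquivQuotient I J hIJ).symm

end Artinian

/-- A subset of `ℝ` that is well-founded for `<` and for `>` is finite. -/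
lemma finite_of_isWF_of_isWF_dual {s : Set ℝ} (h1 : s.IsWF)
    (h2 : Set.IsWF {x : ℝᵒᵈ | OrderDual.ofDual x ∈ s}) : s.Finite := by
  by_contra hinf
  replace hinf : s.Infinite := hinf
  let F : ℕ → ℝ := fun k => (hinf.natEmbedding s k : ℝ)
  have hFinj : Function.Injective F :=
    Subtype.val_injective.comp (hinf.natEmbedding s).injective
  have hFmem : ∀ n, F n ∈ s := fun n => (hinf.natEmbedding s n).2
  obtain ⟨g, hg⟩ := h1.isPWO.exists_monotone_subseq (f := F) hFmem
  have hmono : Monotone (F ∘ g) := hg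
  have hstrict : StrictMono (F ∘ g) :=
    hmono.strictMono_of_injective (hFinj.comp g.injective)
  obtain ⟨g', hg'⟩ := h2.isPWO.exists_monotone_subseq
    (f := fun n => (OrderDual.toDual (F (g n)) : ℝᵒᵈ)) (fun n => hFmem (g n))
  have h01 : F (g (g' 0)) < F (g (g' 1)) := hstrict (g'.strictMono Nat.zero_lt_one)
  have h10 : F (g (g' 1)) ≤ F (g (g' 0)) := hg' (Nat.zero_le 1)
  exact absurd h01 (not_lt.mpr h10)

/-- For a nonnegative real-valued valuation `v` on a Noetherian local domain
`(R,𝔪)` with `v(f) > 0 ↔ f ∈ 𝔪` (for nonzero `f`), the set of values `≤ M` is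
finite for every `M ≥ 0`; in particular, the value set `v(R∖{0})` is a discrete
subsemigroup of `ℝ_{≥0}` (proved inside Lemma 10.2 of the paper). -/
theorem valuation_value_set_discrete {R : Type*} [CommRing R] [IsDomain R]
    [IsNoetherianRing R] [IsLocalRing R] (v : R → ℝ)
    (hmul : ∀ f g : R, f ≠ 0 → g ≠ 0 → v (f * g) = v f + v g)
    (hadd : ∀ f g : R, f ≠ 0 → g ≠ 0 → f + g ≠ 0 → min (v f) (v g) ≤ v (f + g))
    (hnonneg : ∀ f : R, f ≠ 0 → 0 ≤ v f)
    (hcenter : ∀ f : R, f ≠ 0 → (0 < v f ↔ f ∈ IsLocalRing.maximalIdeal R)) :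
    (∀ M : ℝ, 0 ≤ M → {x : ℝ | ∃ f : R, f ≠ 0 ∧ v f = x ∧ x ≤ M}.Finite) ∧
      (∀ x ∈ v '' {f : R | f ≠ 0}, ∀ y ∈ v '' {f : R | f ≠ 0},
        x + y ∈ v '' {f : R | f ≠ 0}) ∧
      (∀ x ∈ v '' {f : R | f ≠ 0}, 0 ≤ x) := by
  classical
  refine ⟨?_, ?_, ?_⟩
  · intro M hM
    by_cases hbot : IsLocalRing.maximalIdeal R = ⊥
    · -- field case: all values are zero
      apply Set.Finite.subset (Set.finite_singleton (0 : ℝ))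
      rintro x ⟨f, hf, rfl, -⟩
      have h1 : ¬(0 < v f) := by
        rw [hcenter f hf, hbot]
        simpa [Ideal.mem_bot] using hf
      simpa using le_antisymm (not_lt.mp h1) (hnonneg f hf)
    · obtain ⟨s, hs⟩ := IsNoetherian.noetherian (IsLocalRing.maximalIdeal R)
      set T : Finset ℝ := (s.filter (fun g => g ≠ 0)).image v with hT
      have hTne : T.Nonempty := by
        by_contra h
        rw [Finset.not_nonempty_iff_eq_empty, Finset.image_eq_empty,
          Finset.filter_eq_empty_iff] at h
        apply hbot
        rw [← hs, eq_bot_iff, Submodule.span_le]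
        intro g hg
        have hg0 := h (Finset.mem_coe.mp hg)
        simp only [not_not] at hg0
        simp [hg0]
      set c : ℝ := T.min' hTne with hc
      have hcpos : 0 < c := by
        have hcmem : c ∈ Finset.image v (Finset.filter (fun g => g ≠ 0) s) := T.min'_mem hTne
        obtain ⟨g, hg, hvg⟩ := Finset.mem_image.mp hcmem
        rw [Finset.mem_filter] at hg
        rw [← hvg]
        exact (hcenter g hg.2).mpr (hs ▸ Submodule.subset_span hg.1)
      set I : ℝ → Ideal R := vIdeal v hmul hadd hnonneg with hIdef
      have h𝔪c : IsLocalRing.maximalIdeal R ≤ I c := by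
        rw [← hs, Submodule.span_le]
        intro g hg
        rcases eq_or_ne g 0 with rfl | hg0
        · exact Or.inl rfl
        · refine Or.inr (T.min'_le _ ?_)
          exact Finset.mem_image.mpr ⟨g, Finset.mem_filter.mpr ⟨Finset.mem_coe.mp hg, hg0⟩, rfl⟩
      obtain ⟨n, hn⟩ := exists_nat_gt (M / c)
      have hMn : M < n * c := (div_lt_iff₀ hcpos).mp hn
      have hpow : (IsLocalRing.maximalIdeal R) ^ n ≤ I ((n : ℝ) * c) := vIdeal_pow_le h𝔪c n
      have hker : ∀ t : ℝ, t ≤ M → ((IsLocalRing.maximalIdeal R) ^ n : Ideal R) ≤ I t := by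
        intro t ht f hf
        rcases hpow hf with rfl | hvf
        · exact Or.inl rfl
        · exact Or.inr (le_trans (ht.trans hMn.le) hvf)
      set Q := R ⧸ ((IsLocalRing.maximalIdeal R) ^ n : Ideal R) with hQ
      set Φ : ℝ → Submodule R Q :=
        fun t => Submodule.map
          (Submodule.mkQ ((IsLocalRing.maximalIdeal R) ^ n : Ideal R)) (I t) with hΦ
      have hanti : ∀ {x y : ℝ}, x ≤ y → Φ y ≤ Φ x :=
        fun {x y} h => Submodule.map_mono (vIdeal_antitone h)
      have hstrict : ∀ x y : ℝ, (∃ f : R, f ≠ 0 ∧ v f = x) → x < y → y ≤ M → Φ y < Φ x := by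
        rintro x y ⟨f, hf0, hfx⟩ hxy hyM
        refine lt_of_le_of_ne (hanti hxy.le) ?_
        intro he
        have hfm : Submodule.mkQ ((IsLocalRing.maximalIdeal R) ^ n : Ideal R) f ∈ Φ x :=
          Submodule.mem_map_of_mem (Or.inr (le_of_eq hfx.symm))
        rw [← he] at hfm
        have hmem2 : f ∈ ((IsLocalRing.maximalIdeal R) ^ n : Ideal R) ⊔ I y := by
          rw [← Submodule.comap_map_mkQ]
          exact hfm
        rw [sup_eq_right.mpr (hker y hyM)] at hmem2
        rcases hmem2 with rfl | hvy
        · exact hf0 rfl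
        · rw [hfx] at hvy
          exact absurd hvy (not_le.mpr hxy)
      apply finite_of_isWF_of_isWF_dual
      · rw [Set.isWF_iff_no_descending_seq]
        intro t ht hmem
        have hchain : ∀ k : ℕ, I (t k) < I (t (k + 1)) := by
          intro k
          obtain ⟨f, hf0, hfv, hfM⟩ := hmem (k + 1)
          refine lt_of_le_of_ne (vIdeal_antitone (ht (Nat.lt_succ_self k)).le) ?_
          intro he
          have hfmem : f ∈ I (t (k + 1)) := Or.inr (le_of_eq hfv.symm)
          rw [← he] at hfmem
          rcases hfmem with rfl | hv
          · exact hf0 rfl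
          · rw [hfv] at hv
            exact absurd (ht (Nat.lt_succ_self k)) (not_lt.mpr hv)
        have hwf : WellFounded ((· > ·) : Ideal R → Ideal R → Prop) :=
          (inferInstance : IsNoetherianRing R).wf
        exact (RelEmbedding.natGT (fun k => I (t k))
          hchain).not_wellFounded hwf
      · rw [Set.isWF_iff_no_descending_seq]
        intro t ht hmem
        have hlt : ∀ k : ℕ, OrderDual.ofDual (t k) < OrderDual.ofDual (t (k + 1)) :=
          fun k => ht (Nat.lt_succ_self k)
        have hchain : ∀ k : ℕ, Φ (OrderDual.ofDual (t (k + 1))) < Φ (OrderDual.ofDual (t k)) := by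
          intro k
          obtain ⟨f, hf0, hfv, hfM⟩ := hmem k
          obtain ⟨f', hf0', hfv', hfM'⟩ := hmem (k + 1)
          exact hstrict _ _ ⟨f, hf0, hfv⟩ (hlt k) hfM'
        haveI hart : IsArtinian R Q := isArtinian_quot_pow n
        have hwf : WellFounded ((· < ·) : Submodule R Q → Submodule R Q → Prop) := hart.wf
        exact (RelEmbedding.natGT (fun k => Φ (OrderDual.ofDual (t k)))
          hchain).not_wellFounded hwf
  · rintro x ⟨f, hf, rfl⟩ y ⟨g, hg, rfl⟩
    exact ⟨f * g, mul_ne_zero hf hg, hmul f g hf hg⟩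
  · rintro x ⟨f, hf, rfl⟩
    exact hnonneg f hf
end

section
/- Let r ≥ 1 and let S ⊆ ℝ_{≥0}^r be a nonempty set of vectors with nonnegative coordinates. Then the function g : ℝ_{≥0}^r → ℝ defined by g(α) = inf{⟨u,α⟩ : u ∈ S}, where ⟨u,α⟩ = Σ_{i=1}^r u_i α_i, is real-valued and continuous on ℝ_{≥0}^r. -/
/-- For a nonempty set `S ⊆ ℝ_{≥0}^r`, the function
`g(α) = inf{⟨u,α⟩ : u ∈ S}` is real-valued (the infimum is over a nonempty set
bounded below) and continuous on the closed positive orthant `ℝ_{≥0}^r`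
(used in Proposition 3.1 of the paper). -/
theorem continuousOn_inf_of_linear {r : ℕ} (hr : 1 ≤ r) (S : Set (Fin r → ℝ))
    (hne : S.Nonempty) (hS : ∀ u ∈ S, ∀ i, 0 ≤ u i) :
    (∀ α : Fin r → ℝ, (∀ i, 0 ≤ α i) →
        BddBelow {x : ℝ | ∃ u ∈ S, x = ∑ i, u i * α i} ∧
          {x : ℝ | ∃ u ∈ S, x = ∑ i, u i * α i}.Nonempty) ∧
      ContinuousOn (fun α : Fin r → ℝ => sInf {x : ℝ | ∃ u ∈ S, x = ∑ i, u i * α i})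
        {α : Fin r → ℝ | ∀ i, 0 ≤ α i} := by
  have hbdd : ∀ α : Fin r → ℝ, (∀ i, 0 ≤ α i) →
      BddBelow {x : ℝ | ∃ u ∈ S, x = ∑ i, u i * α i} := by
    intro α hα
    refine ⟨0, ?_⟩
    rintro x ⟨u, hu, rfl⟩
    exact Finset.sum_nonneg fun i _ => mul_nonneg (hS u hu i) (hα i)
  have hnonempty : ∀ α : Fin r → ℝ,
      {x : ℝ | ∃ u ∈ S, x = ∑ i, u i * α i}.Nonempty := by
    intro α
    obtain ⟨u, hu⟩ := hne
    exact ⟨_, u, hu, rfl⟩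
  refine ⟨fun α hα => ⟨hbdd α hα, hnonempty α⟩, ?_⟩
  set g := fun α : Fin r → ℝ => sInf {x : ℝ | ∃ u ∈ S, x = ∑ i, u i * α i} with hg
  intro α hα
  have hα' : ∀ i, 0 ≤ α i := hα
  have hG0 : 0 ≤ g α := by
    refine le_csInf (hnonempty α) ?_
    rintro x ⟨u, hu, rfl⟩
    exact Finset.sum_nonneg fun i _ => mul_nonneg (hS u hu i) (hα' i)
  rw [ContinuousWithinAt, Metric.tendsto_nhds]
  intro ε hε
  set G := g α with hGdef
  set δ := min 1 (ε / (G + 1)) with hδdef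
  have hδpos : 0 < δ := lt_min one_pos (div_pos hε (by linarith))
  have hδ1 : δ ≤ 1 := min_le_left _ _
  have hδG : δ * G < ε := by
    calc δ * G ≤ ε / (G + 1) * G :=
          mul_le_mul_of_nonneg_right (min_le_right _ _) hG0
      _ < ε := by
          rw [div_mul_eq_mul_div, div_lt_iff₀ (by linarith)]
          nlinarith
  -- lower bound: eventually β i ≥ (1 - δ) * α i for all i
  have hlow : ∀ᶠ β in nhdsWithin α {α : Fin r → ℝ | ∀ i, 0 ≤ α i},
      ∀ i, (1 - δ) * α i ≤ β i := by
    rw [Filter.eventually_all]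
    intro i
    rcases eq_or_lt_of_le (hα' i) with h0 | hpos
    · filter_upwards [self_mem_nhdsWithin] with β hβ
      rw [← h0, mul_zero]
      exact hβ i
    · have hlt : (1 - δ) * α i < α i := by nlinarith
      have hc : ContinuousWithinAt (fun β : Fin r → ℝ => β i)
          {α : Fin r → ℝ | ∀ i, 0 ≤ α i} α :=
        (continuous_apply i).continuousWithinAt
      exact (hc.eventually (eventually_gt_nhds hlt)).mono fun β h => le_of_lt h
  -- upper bound: pick u0 with ⟨u0, α⟩ < G + ε/2
  obtain ⟨x, hxmem, hx⟩ := exists_lt_of_csInf_lt (hnonempty α)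
    (lt_add_of_pos_right G (half_pos hε))
  obtain ⟨u0, hu0, rfl⟩ := hxmem
  have hcont : ContinuousWithinAt (fun β : Fin r → ℝ => ∑ i, u0 i * β i)
      {α : Fin r → ℝ | ∀ i, 0 ≤ α i} α :=
    (continuous_finset_sum _ fun i _ =>
      (continuous_const.mul (continuous_apply i))).continuousWithinAt
  have hup : ∀ᶠ β in nhdsWithin α {α : Fin r → ℝ | ∀ i, 0 ≤ α i},
      ∑ i, u0 i * β i < G + ε :=
    hcont.eventually (eventually_lt_nhds (by linarith))
  filter_upwards [hlow, hup, self_mem_nhdsWithin] with β h1 h2 hβ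
  have hβO : ∀ i, 0 ≤ β i := hβ
  have hgle : g β ≤ ∑ i, u0 i * β i := csInf_le (hbdd β hβO) ⟨u0, hu0, rfl⟩
  have hgge : (1 - δ) * G ≤ g β := by
    refine le_csInf (hnonempty β) ?_
    rintro x ⟨u, hu, rfl⟩
    have h1' : (1 - δ) * ∑ i, u i * α i ≤ ∑ i, u i * β i := by
      rw [Finset.mul_sum]
      refine Finset.sum_le_sum fun i _ => ?_
      calc (1 - δ) * (u i * α i) = u i * ((1 - δ) * α i) := by ring
        _ ≤ u i * β i := mul_le_mul_of_nonneg_left (h1 i) (hS u hu i)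
    have hGle : G ≤ ∑ i, u i * α i := csInf_le (hbdd α hα') ⟨u, hu, rfl⟩
    have := mul_le_mul_of_nonneg_left hGle (by linarith : (0:ℝ) ≤ 1 - δ)
    linarith
  rw [Real.dist_eq, abs_sub_lt_iff]
  constructor
  · linarith
  · nlinarith
end

section
/- Let R be an integral domain and let v and w be nonnegative real-valued valuations on R. Assume there exists a nonzero f ∈ R with v(f) > 0. For each integer m ≥ 1, let 𝔞_m(v) = {f ∈ R : f = 0 or v(f) ≥ m}, which is a nonzero ideal of R. Then inf_{m≥1} w(𝔞_m(v))/m = inf{ w(𝔟)/v(𝔟) : 𝔟 a nonzero ideal of R with v(𝔟) > 0 }. In particular, inf_{m≥1} v(𝔞_m(v))/m = 1. -/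
/-- The value `u(s) = inf{u(f) : f ∈ s, f ≠ 0}` of a function `u : R → ℝ`
on a set `s ⊆ R` (used for ideals of `R`). -/
noncomputable def setVal {R : Type*} [CommRing R] (u : R → ℝ) (s : Set R) : ℝ :=
  sInf {x : ℝ | ∃ f ∈ s, f ≠ 0 ∧ x = u f}

section Aux

variable {R : Type*} [CommRing R] [IsDomain R]

lemma setVal_bddBelow (u : R → ℝ) (hu : ∀ f : R, f ≠ 0 → 0 ≤ u f) (s : Set R) :
    BddBelow {x : ℝ | ∃ f ∈ s, f ≠ 0 ∧ x = u f} :=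
  ⟨0, by rintro x ⟨f, _, hf0, rfl⟩; exact hu f hf0⟩

lemma setVal_nonneg (u : R → ℝ) (hu : ∀ f : R, f ≠ 0 → 0 ≤ u f) (s : Set R) :
    0 ≤ setVal u s :=
  Real.sInf_nonneg (by rintro x ⟨f, _, hf0, rfl⟩; exact hu f hf0)

lemma setVal_le (u : R → ℝ) (hu : ∀ f : R, f ≠ 0 → 0 ≤ u f) {s : Set R} {f : R}
    (hf : f ∈ s) (hf0 : f ≠ 0) : setVal u s ≤ u f :=
  csInf_le (setVal_bddBelow u hu s) ⟨f, hf, hf0, rfl⟩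

lemma le_setVal (u : R → ℝ) {s : Set R} {c : ℝ}
    (hne : ∃ f ∈ s, f ≠ 0) (h : ∀ f ∈ s, f ≠ 0 → c ≤ u f) : c ≤ setVal u s := by
  obtain ⟨f, hf, hf0⟩ := hne
  exact le_csInf ⟨u f, f, hf, hf0, rfl⟩ (by rintro x ⟨g, hg, hg0, rfl⟩; exact h g hg hg0)

lemma valpow (v : R → ℝ) (hvmul : ∀ f g : R, f ≠ 0 → g ≠ 0 → v (f * g) = v f + v g)
    {f : R} (hf : f ≠ 0) : ∀ k : ℕ, v (f ^ (k + 1)) = (k + 1 : ℝ) * v f := by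
  intro k
  induction k with
  | zero => simp
  | succ n ih =>
    have h1 : f ^ (n + 1 + 1) = f ^ (n + 1) * f := by ring
    rw [h1, hvmul _ _ (pow_ne_zero _ hf) hf, ih]
    push_cast
    ring

/-- `𝔞_m(v)` as an ideal. -/
def aIdeal (v : R → ℝ)
    (hvmul : ∀ f g : R, f ≠ 0 → g ≠ 0 → v (f * g) = v f + v g)
    (hvadd : ∀ f g : R, f ≠ 0 → g ≠ 0 → f + g ≠ 0 → min (v f) (v g) ≤ v (f + g))
    (hvnonneg : ∀ f : R, f ≠ 0 → 0 ≤ v f) (m : ℝ) : Ideal R where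
  carrier := {f : R | f = 0 ∨ m ≤ v f}
  zero_mem' := Or.inl rfl
  add_mem' := by
    intro a b ha hb
    by_cases ha0 : a = 0
    · subst ha0; simpa using hb
    by_cases hb0 : b = 0
    · subst hb0; simpa using ha
    replace ha := ha.resolve_left ha0
    replace hb := hb.resolve_left hb0
    by_cases hab : a + b = 0
    · exact Or.inl hab
    exact Or.inr (le_trans (le_min ha hb) (hvadd a b ha0 hb0 hab))
  smul_mem' := by
    intro c x hx
    rcases hx with rfl | hx
    · simp
    by_cases hc : c = 0
    · simp [hc]
    by_cases hx0 : x = 0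
    · simp [hx0]
    right
    have : v (c * x) = v c + v x := hvmul c x hc hx0
    simpa [smul_eq_mul, this] using le_add_of_nonneg_left (hvnonneg c hc) |>.trans' hx

end Aux

section Main

variable {R : Type*} [CommRing R] [IsDomain R]

theorem main_eq (v w : R → ℝ)
    (hvmul : ∀ f g : R, f ≠ 0 → g ≠ 0 → v (f * g) = v f + v g)
    (hvadd : ∀ f g : R, f ≠ 0 → g ≠ 0 → f + g ≠ 0 → min (v f) (v g) ≤ v (f + g))
    (hvnonneg : ∀ f : R, f ≠ 0 → 0 ≤ v f)
    (hwmul : ∀ f g : R, f ≠ 0 → g ≠ 0 → w (f * g) = w f + w g)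
    (hwnonneg : ∀ f : R, f ≠ 0 → 0 ≤ w f)
    (hnontrivial : ∃ f : R, f ≠ 0 ∧ 0 < v f) :
    sInf {y : ℝ | ∃ m : ℕ, 1 ≤ m ∧
        y = setVal w {f : R | (m : ℝ) ≤ v f} / (m : ℝ)} =
      sInf {y : ℝ | ∃ 𝔟 : Ideal R, 𝔟 ≠ ⊥ ∧ 0 < setVal v (𝔟 : Set R) ∧
        y = setVal w (𝔟 : Set R) / setVal v (𝔟 : Set R)} := by
  obtain ⟨f0, hf00, hf0pos⟩ := hnontrivial
  -- elements of arbitrarily large valuation exist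
  have exmem : ∀ m : ℝ, ∃ g : R, g ≠ 0 ∧ m ≤ v g := by
    intro m
    obtain ⟨k, hk⟩ := exists_nat_gt (m / v f0)
    refine ⟨f0 ^ (k + 1), pow_ne_zero _ hf00, ?_⟩
    rw [valpow v hvmul hf00 k]
    have h1 : m / v f0 ≤ (k : ℝ) + 1 := le_of_lt (hk.trans (by linarith))
    calc m = (m / v f0) * v f0 := (div_mul_cancel₀ m hf0pos.ne').symm
      _ ≤ ((k : ℝ) + 1) * v f0 := mul_le_mul_of_nonneg_right h1 hf0pos.le
  set S := {y : ℝ | ∃ m : ℕ, 1 ≤ m ∧ y = setVal w {f : R | (m : ℝ) ≤ v f} / (m : ℝ)} with hS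
  set T := {y : ℝ | ∃ 𝔟 : Ideal R, 𝔟 ≠ ⊥ ∧ 0 < setVal v (𝔟 : Set R) ∧
      y = setVal w (𝔟 : Set R) / setVal v (𝔟 : Set R)} with hT
  have hSb : BddBelow S := by
    refine ⟨0, ?_⟩
    rintro x ⟨m, hm, rfl⟩
    exact div_nonneg (setVal_nonneg w hwnonneg _) (by positivity)
  have hTb : BddBelow T := by
    refine ⟨0, ?_⟩
    rintro x ⟨𝔟, h1, h2, rfl⟩
    exact div_nonneg (setVal_nonneg w hwnonneg _) h2.le
  have hval : ∀ (u : R → ℝ) (m : ℝ),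
      setVal u ((aIdeal v hvmul hvadd hvnonneg m : Ideal R) : Set R)
        = setVal u {f : R | m ≤ v f} := by
    intro u m
    unfold setVal
    congr 1
    ext x
    constructor
    · rintro ⟨f, hf, hf0, rfl⟩
      exact ⟨f, Or.resolve_left hf hf0, hf0, rfl⟩
    · rintro ⟨f, hf, hf0, rfl⟩
      exact ⟨f, Or.inr hf, hf0, rfl⟩
  have hbot : ∀ m : ℝ, aIdeal v hvmul hvadd hvnonneg m ≠ ⊥ := by
    intro m h
    obtain ⟨g, hg0, hgm⟩ := exmem m
    have hmem : g ∈ aIdeal v hvmul hvadd hvnonneg m := Or.inr hgm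
    rw [h] at hmem
    exact hg0 (Ideal.mem_bot.mp hmem)
  have hvge : ∀ m : ℝ, m ≤ setVal v {f : R | m ≤ v f} := by
    intro m
    obtain ⟨g, hg0, hgm⟩ := exmem m
    exact le_setVal v ⟨g, hgm, hg0⟩ (fun f hf _ => hf)
  have hvgeI : ∀ m : ℝ, m ≤ setVal v ((aIdeal v hvmul hvadd hvnonneg m : Ideal R) : Set R) := by
    intro m; rw [hval]; exact hvge m
  -- key step: sInf S ≤ w g / v g for any nonzero g with v g > 0
  have key : ∀ g : R, g ≠ 0 → 0 < v g → sInf S ≤ w g / v g := by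
    intro g hg0 hvg
    obtain ⟨k0, hk0⟩ := exists_nat_gt (1 / v g)
    have htend : Filter.Tendsto (fun k : ℕ => w g / (v g - 1 / (k : ℝ)))
        Filter.atTop (nhds (w g / v g)) := by
      have h0 : Filter.Tendsto (fun k : ℕ => v g - 1 / (k : ℝ)) Filter.atTop (nhds (v g)) := by
        simpa using tendsto_const_nhds.sub (tendsto_one_div_atTop_nhds_zero_nat (𝕜 := ℝ))
      exact tendsto_const_nhds.div h0 hvg.ne'
    refine ge_of_tendsto htend ?_
    filter_upwards [Filter.eventually_ge_atTop (k0 + 1)] with k hk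
    have hk1 : 1 ≤ k := le_trans (Nat.le_add_left 1 k0) hk
    have hkk0 : (k0 : ℝ) ≤ (k : ℝ) := by exact_mod_cast le_trans (Nat.le_succ k0) hk
    have hkg : 1 / v g < (k : ℝ) := lt_of_lt_of_le hk0 hkk0
    have h1 : 1 < (k : ℝ) * v g := by
      rw [div_lt_iff₀ hvg] at hkg; linarith
    have hkpos : (0 : ℝ) < (k : ℝ) := by exact_mod_cast hk1
    set m := ⌊(k : ℝ) * v g⌋₊ with hm
    have hm1 : 1 ≤ m := Nat.le_floor (by exact_mod_cast h1.le)
    have hmle : (m : ℝ) ≤ (k : ℝ) * v g := Nat.floor_le (by positivity)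
    have hmgt : (k : ℝ) * v g - 1 < (m : ℝ) := by
      have := Nat.lt_floor_add_one ((k : ℝ) * v g); linarith
    have hgk0 : g ^ k ≠ 0 := pow_ne_zero _ hg0
    obtain ⟨k', rfl⟩ : ∃ k', k = k' + 1 := ⟨k - 1, (Nat.succ_pred_eq_of_pos hk1).symm⟩
    have hvpk : v (g ^ (k' + 1)) = ((k' + 1 : ℕ) : ℝ) * v g := by
      rw [valpow v hvmul hg0]; push_cast; ring
    have hwpk : w (g ^ (k' + 1)) = ((k' + 1 : ℕ) : ℝ) * w g := by
      rw [valpow w hwmul hg0]; push_cast; ring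
    set k := k' + 1
    have hmem : g ^ k ∈ {f : R | (m : ℝ) ≤ v f} := by
      rw [Set.mem_setOf_eq, hvpk]; exact hmle
    have step1 : sInf S ≤ setVal w {f : R | (m : ℝ) ≤ v f} / (m : ℝ) :=
      csInf_le hSb ⟨m, hm1, rfl⟩
    have step2 : setVal w {f : R | (m : ℝ) ≤ v f} ≤ (k : ℝ) * w g := by
      rw [← hwpk]; exact setVal_le w hwnonneg hmem hgk0
    have hmpos : (0 : ℝ) < (m : ℝ) := by exact_mod_cast hm1
    have hden : (0 : ℝ) < (k : ℝ) * v g - 1 := by linarith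
    have step3 : setVal w {f : R | (m : ℝ) ≤ v f} / (m : ℝ)
        ≤ ((k : ℝ) * w g) / ((k : ℝ) * v g - 1) :=
      div_le_div₀ (mul_nonneg hkpos.le (hwnonneg g hg0)) step2 hden hmgt.le
    have heq : ((k : ℝ) * w g) / ((k : ℝ) * v g - 1) = w g / (v g - 1 / (k : ℝ)) := by
      have hk0' : (k : ℝ) ≠ 0 := hkpos.ne'
      have hsub : (0 : ℝ) < v g - 1 / (k : ℝ) := by
        have h2 : 1 / (k : ℝ) < v g := by
          rw [div_lt_iff₀ hkpos, mul_comm]; exact h1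
        linarith
      rw [div_eq_div_iff hden.ne' hsub.ne']
      field_simp
    calc sInf S ≤ setVal w {f : R | (m : ℝ) ≤ v f} / (m : ℝ) := step1
      _ ≤ ((k : ℝ) * w g) / ((k : ℝ) * v g - 1) := step3
      _ = w g / (v g - 1 / (k : ℝ)) := heq
  -- T nonempty
  have hI1 : (0 : ℝ) < setVal v ((aIdeal v hvmul hvadd hvnonneg 1 : Ideal R) : Set R) :=
    lt_of_lt_of_le one_pos (hvgeI 1)
  have hTne : T.Nonempty := ⟨_, ⟨aIdeal v hvmul hvadd hvnonneg 1, hbot 1, hI1, rfl⟩⟩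
  have hSne : S.Nonempty := ⟨_, ⟨1, le_refl 1, rfl⟩⟩
  apply le_antisymm
  · -- sInf S ≤ sInf T
    refine le_csInf hTne ?_
    rintro b ⟨𝔟, hb0, hbpos, rfl⟩
    obtain ⟨g1, hg1, hg10⟩ := Submodule.exists_mem_ne_zero_of_ne_bot hb0
    have hvalne : {x : ℝ | ∃ f ∈ (𝔟 : Set R), f ≠ 0 ∧ x = w f}.Nonempty :=
      ⟨w g1, g1, hg1, hg10, rfl⟩
    apply le_of_forall_pos_le_add
    intro ε hε
    obtain ⟨x, ⟨g, hgmem, hg0, rfl⟩, hx⟩ :=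
      Real.lt_sInf_add_pos hvalne (mul_pos hε hbpos)
    have hvg : 0 < v g := lt_of_lt_of_le hbpos (setVal_le v hvnonneg hgmem hg0)
    have hstep : w g / v g ≤ (setVal w (𝔟 : Set R) + ε * setVal v (𝔟 : Set R))
        / setVal v (𝔟 : Set R) := by
      refine div_le_div₀ ?_ hx.le hbpos (setVal_le v hvnonneg hgmem hg0)
      exact add_nonneg (setVal_nonneg w hwnonneg _) (mul_pos hε hbpos).le
    have heq2 : (setVal w (𝔟 : Set R) + ε * setVal v (𝔟 : Set R)) / setVal v (𝔟 : Set R)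
        = setVal w (𝔟 : Set R) / setVal v (𝔟 : Set R) + ε := by
      rw [add_div, mul_div_assoc, div_self hbpos.ne', mul_one]
    calc sInf S ≤ w g / v g := key g hg0 hvg
      _ ≤ _ := hstep
      _ = _ := heq2
  · -- sInf T ≤ sInf S
    refine le_csInf hSne ?_
    rintro a ⟨m, hm, rfl⟩
    have hmpos : (0 : ℝ) < (m : ℝ) := by exact_mod_cast hm
    have hIpos : (0 : ℝ) < setVal v ((aIdeal v hvmul hvadd hvnonneg (m : ℝ) : Ideal R) : Set R) :=
      lt_of_lt_of_le hmpos (hvgeI (m : ℝ))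
    have hTmem : setVal w ((aIdeal v hvmul hvadd hvnonneg (m : ℝ) : Ideal R) : Set R)
        / setVal v ((aIdeal v hvmul hvadd hvnonneg (m : ℝ) : Ideal R) : Set R) ∈ T :=
      ⟨aIdeal v hvmul hvadd hvnonneg (m : ℝ), hbot _, hIpos, rfl⟩
    refine le_trans (csInf_le hTb hTmem) ?_
    rw [hval w, hval v]
    exact div_le_div₀ (setVal_nonneg w hwnonneg _) (le_refl _) hmpos (hvge (m : ℝ))

end Main

/-- Lemma 2.4: for nonnegative real-valued valuations `v, w` on a domain `R`
with `v` nontrivial, letting `𝔞_m(v) = {f : f = 0 or v(f) ≥ m}`, one has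
`inf_m w(𝔞_m(v))/m = inf{w(𝔟)/v(𝔟) : 𝔟 nonzero ideal with v(𝔟) > 0}`; in
particular `inf_m v(𝔞_m(v))/m = 1`. -/
theorem valuation_ideals_inf {R : Type*} [CommRing R] [IsDomain R]
    (v w : R → ℝ)
    (hvmul : ∀ f g : R, f ≠ 0 → g ≠ 0 → v (f * g) = v f + v g)
    (hvadd : ∀ f g : R, f ≠ 0 → g ≠ 0 → f + g ≠ 0 → min (v f) (v g) ≤ v (f + g))
    (hvnonneg : ∀ f : R, f ≠ 0 → 0 ≤ v f)
    (hwmul : ∀ f g : R, f ≠ 0 → g ≠ 0 → w (f * g) = w f + w g)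
    (hwadd : ∀ f g : R, f ≠ 0 → g ≠ 0 → f + g ≠ 0 → min (w f) (w g) ≤ w (f + g))
    (hwnonneg : ∀ f : R, f ≠ 0 → 0 ≤ w f)
    (hnontrivial : ∃ f : R, f ≠ 0 ∧ 0 < v f) :
    sInf {y : ℝ | ∃ m : ℕ, 1 ≤ m ∧
        y = setVal w {f : R | (m : ℝ) ≤ v f} / (m : ℝ)} =
      sInf {y : ℝ | ∃ 𝔟 : Ideal R, 𝔟 ≠ ⊥ ∧ 0 < setVal v (𝔟 : Set R) ∧
        y = setVal w (𝔟 : Set R) / setVal v (𝔟 : Set R)} ∧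
    sInf {y : ℝ | ∃ m : ℕ, 1 ≤ m ∧
        y = setVal v {f : R | (m : ℝ) ≤ v f} / (m : ℝ)} = 1 := by
  constructor
  · exact main_eq v w hvmul hvadd hvnonneg hwmul hwnonneg hnontrivial
  · rw [main_eq v v hvmul hvadd hvnonneg hvmul hvnonneg hnontrivial]
    have hsingle : {y : ℝ | ∃ 𝔟 : Ideal R, 𝔟 ≠ ⊥ ∧ 0 < setVal v (𝔟 : Set R) ∧
        y = setVal v (𝔟 : Set R) / setVal v (𝔟 : Set R)} = {1} := by
      ext y
      simp only [Set.mem_setOf_eq, Set.mem_singleton_iff]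
      constructor
      · rintro ⟨𝔟, h1, h2, rfl⟩
        exact div_self h2.ne'
      · rintro rfl
        obtain ⟨f0, hf00, hf0pos⟩ := hnontrivial
        -- the ideal 𝔞_1(v)
        set I := aIdeal v hvmul hvadd hvnonneg 1 with hI
        have exmem : ∃ g : R, g ≠ 0 ∧ (1 : ℝ) ≤ v g := by
          obtain ⟨k, hk⟩ := exists_nat_gt (1 / v f0)
          refine ⟨f0 ^ (k + 1), pow_ne_zero _ hf00, ?_⟩
          rw [valpow v hvmul hf00 k]
          have h1 : 1 / v f0 ≤ (k : ℝ) + 1 := le_of_lt (hk.trans (by linarith))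
          calc (1 : ℝ) = (1 / v f0) * v f0 := (div_mul_cancel₀ 1 hf0pos.ne').symm
            _ ≤ ((k : ℝ) + 1) * v f0 := mul_le_mul_of_nonneg_right h1 hf0pos.le
        obtain ⟨g, hg0, hg1⟩ := exmem
        have hIbot : I ≠ ⊥ := by
          intro h
          have hmem : g ∈ I := Or.inr hg1
          rw [h] at hmem
          exact hg0 (Ideal.mem_bot.mp hmem)
        have hIpos : 0 < setVal v (I : Set R) := by
          refine lt_of_lt_of_le one_pos (le_setVal v ⟨g, Or.inr hg1, hg0⟩ ?_)
          rintro f (rfl | hf) hf0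
          · exact absurd rfl hf0
          · exact hf
        exact ⟨I, hIbot, hIpos, (div_self hIpos.ne').symm⟩
    rw [hsingle, csInf_singleton]
end

section
/- Let (R,𝔪) be a Noetherian local ring that is complete with respect to the 𝔪-adic topology. Let (I_N)_{N≥1} and (J_N)_{N≥1} be sequences of ideals of R with I_{N+1} ⊆ I_N and J_{N+1} ⊆ J_N for all N, and set I = ⋂_{N≥1} I_N and J = ⋂_{N≥1} J_N. Then I·J = ⋂_{N≥1} I_N·J_N. -/
set_option linter.unusedSectionVars false

section Aux

open IsLocalRing

variable {R : Type*} [CommRing R] [IsNoetherianRing R] [IsLocalRing R]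

lemma aux_artinian_of_smul_eq_bot
    {M : Type*} [AddCommGroup M] [Module R M] [Module.Finite R M]
    (h : (maximalIdeal R) • (⊤ : Submodule R M) = ⊥) : IsArtinian R M := by
  have hts : Module.IsTorsionBySet R M (maximalIdeal R : Set R) := by
    intro x r
    have : (r : R) • x ∈ ((maximalIdeal R) • (⊤ : Submodule R M)) :=
      Submodule.smul_mem_smul r.2 Submodule.mem_top
    rw [h] at this
    simpa using this
  letI : Module (R ⧸ maximalIdeal R) M := hts.module
  haveI : IsScalarTower R (R ⧸ maximalIdeal R) M := hts.isScalarTower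
  haveI : Module.Finite (R ⧸ maximalIdeal R) M :=
    Module.Finite.of_restrictScalars_finite R _ _
  letI := Ideal.Quotient.field (maximalIdeal R)
  haveI hart : IsArtinian (R ⧸ maximalIdeal R) M := isArtinian_of_fg_of_artinian'
  let e : Submodule R M → Submodule (R ⧸ maximalIdeal R) M := fun p =>
    { carrier := p
      add_mem' := fun ha hb => p.add_mem ha hb
      zero_mem' := p.zero_mem
      smul_mem' := by
        intro c x hx
        obtain ⟨r, rfl⟩ := Ideal.Quotient.mk_surjective c
        show (Ideal.Quotient.mk _ r) • x ∈ p
        rw [Module.IsTorsionBySet.mk_smul hts]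
        exact p.smul_mem r hx }
  have hle : ∀ p q : Submodule R M, e p ≤ e q ↔ p ≤ q := fun p q =>
    ⟨fun h x hx => h hx, fun h x hx => h hx⟩
  have hlt : ∀ p q : Submodule R M, e p < e q ↔ p < q := fun p q => by
    rw [lt_iff_le_not_ge, lt_iff_le_not_ge, hle, hle]
  constructor
  exact Subrelation.wf (fun {p q} hpq => (hlt p q).mpr hpq)
    (InvImage.wf e (IsWellFounded.wf))

lemma aux_artinian_of_pow_smul_eq_bot (n : ℕ)
    {M : Type*} [AddCommGroup M] [Module R M] [Module.Finite R M]
    (h : (maximalIdeal R) ^ n • (⊤ : Submodule R M) = ⊥) : IsArtinian R M := by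
  induction n generalizing M with
  | zero =>
    rw [pow_zero, Ideal.one_eq_top, Submodule.top_smul] at h
    haveI : Subsingleton M := by
      refine subsingleton_of_forall_eq 0 fun x => ?_
      have : x ∈ (⊥ : Submodule R M) := h ▸ Submodule.mem_top
      simpa using this
    infer_instance
  | succ n ih =>
    set S : Submodule R M := maximalIdeal R • ⊤ with hS
    haveI : IsNoetherian R M := isNoetherian_of_isNoetherianRing_of_finite R M
    haveI hq : IsArtinian R (M ⧸ S) := by
      apply aux_artinian_of_smul_eq_bot
      rw [show (⊤ : Submodule R (M ⧸ S)) = Submodule.map S.mkQ ⊤ by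
        rw [Submodule.map_top, Submodule.range_mkQ]]
      rw [← Submodule.map_smul'']
      rw [eq_bot_iff]
      rintro x ⟨y, hy, rfl⟩
      simp only [Submodule.mem_bot, Submodule.mkQ_apply]
      exact (Submodule.Quotient.mk_eq_zero S).mpr hy
    haveI : Module.Finite R S := Module.Finite.iff_fg.mpr (IsNoetherian.noetherian S)
    haveI hs : IsArtinian R S := by
      apply ih
      have hmap : Submodule.map S.subtype ((maximalIdeal R) ^ n • (⊤ : Submodule R S))
          = (maximalIdeal R) ^ n • S := by
        rw [Submodule.map_smul'', Submodule.map_top, Submodule.range_subtype]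
      have h2 : (maximalIdeal R) ^ n • S = ⊥ := by
        rw [hS, ← Submodule.smul_assoc, smul_eq_mul, ← pow_succ]
        exact h
      rw [eq_bot_iff]
      intro x hx
      have hx' : (x : M) ∈ Submodule.map S.subtype ((maximalIdeal R) ^ n • ⊤) :=
        ⟨x, hx, rfl⟩
      rw [hmap, h2] at hx'
      simpa using hx'
    exact (isArtinian_iff_submodule_quotient S).mpr ⟨hs, hq⟩

/-- Stabilization: for an antitone sequence of ideals, `a N + 𝔪^n` stabilizes in `N`. -/
lemma aux_stab (a : ℕ → Ideal R) (ha : Antitone a) (n : ℕ) :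
    ∃ N0, ∀ N, N0 ≤ N → a N + maximalIdeal R ^ n = a N0 + maximalIdeal R ^ n := by
  set K : Ideal R := maximalIdeal R ^ n with hK
  haveI : IsArtinian R (R ⧸ K) := by
    apply aux_artinian_of_pow_smul_eq_bot n
    rw [show (⊤ : Submodule R (R ⧸ K)) = Submodule.map K.mkQ ⊤ by
      rw [Submodule.map_top, Submodule.range_mkQ]]
    rw [← Submodule.map_smul'']
    rw [eq_bot_iff]
    rintro x ⟨y, hy, rfl⟩
    simp only [Submodule.mem_bot, Submodule.mkQ_apply]
    refine (Submodule.Quotient.mk_eq_zero K).mpr ?_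
    rw [smul_eq_mul, Ideal.mul_top] at hy
    exact hy
  have hmono : ∀ {N M : ℕ}, N ≤ M →
      Submodule.map K.mkQ ↑(a M + K) ≤ Submodule.map K.mkQ ↑(a N + K) :=
    fun {N M} h => Submodule.map_mono (add_le_add_left (ha h) K)
  obtain ⟨N0, hN0⟩ := IsArtinian.monotone_stabilizes (R := R) (M := R ⧸ K)
    ⟨fun N => OrderDual.toDual (Submodule.map K.mkQ ↑(a N + K)),
     fun N M h => hmono h⟩
  refine ⟨N0, fun N hN => ?_⟩
  have := hN0 N hN
  have hcomap : ∀ M : ℕ, Submodule.comap K.mkQ (Submodule.map K.mkQ ↑(a M + K))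
      = ↑(a M + K) := by
    intro M
    rw [Submodule.comap_map_eq, Submodule.ker_mkQ]
    rw [sup_eq_left, Ideal.add_eq_sup]
    exact le_sup_right
  have : Submodule.map K.mkQ ↑(a N0 + K) = Submodule.map K.mkQ ↑(a N + K) :=
    congrArg OrderDual.ofDual this
  have := congrArg (Submodule.comap K.mkQ) this
  rw [hcomap, hcomap] at this
  exact_mod_cast this.symm

/-- Closedness: every ideal is closed in the `𝔪`-adic topology. -/
lemma aux_closed (K : Ideal R) : (⨅ n : ℕ, K + maximalIdeal R ^ n) = K := by
  refine le_antisymm ?_ (le_iInf fun n => by rw [Ideal.add_eq_sup]; exact le_sup_left)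
  intro x hx
  rw [Ideal.mem_iInf] at hx
  have hbot : (⨅ i : ℕ, maximalIdeal R ^ i • ⊤ : Submodule R (R ⧸ K)) = ⊥ :=
    Ideal.iInf_pow_smul_eq_bot_of_isLocalRing (maximalIdeal R)
      (Ideal.IsMaximal.ne_top (maximalIdeal.isMaximal R))
  have hmem : K.mkQ x ∈ (⨅ i : ℕ, maximalIdeal R ^ i • ⊤ : Submodule R (R ⧸ K)) := by
    rw [Submodule.mem_iInf]
    intro i
    have hxi := hx i
    rw [Ideal.add_eq_sup, Submodule.mem_sup] at hxi
    obtain ⟨k, hk, m, hm, rfl⟩ := hxi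
    rw [show (maximalIdeal R ^ i • ⊤ : Submodule R (R ⧸ K))
        = Submodule.map K.mkQ (maximalIdeal R ^ i • ⊤) by
      rw [Submodule.map_smul'', Submodule.map_top, Submodule.range_mkQ]]
    refine ⟨m, by rwa [smul_eq_mul, Ideal.mul_top], ?_⟩
    simp only [Submodule.mkQ_apply]
    rw [Submodule.Quotient.eq]
    simpa using hk
  rw [hbot, Submodule.mem_bot, Submodule.mkQ_apply,
    Submodule.Quotient.mk_eq_zero] at hmem
  exact hmem

/-- Chevalley's lemma. -/
lemma aux_chevalley [IsAdicComplete (maximalIdeal R) R]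
    (a : ℕ → Ideal R) (ha : Antitone a) (ℓ : ℕ) :
    ∃ N, a N ≤ (⨅ M, a M) + maximalIdeal R ^ ℓ := by
  set 𝔪 : Ideal R := maximalIdeal R with h𝔪
  set Ia : Ideal R := ⨅ M, a M with hIa
  by_contra hcon
  push_neg at hcon
  -- choose stabilization indices
  have hφ : ∀ n : ℕ, ∃ N0, ∀ N, N0 ≤ N → a N + 𝔪 ^ n = a N0 + 𝔪 ^ n :=
    fun n => aux_stab a ha n
  choose φ hφ using hφ
  set b : ℕ → Ideal R := fun n => a (φ n) + 𝔪 ^ n with hb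
  -- the stable value is below every `a N + 𝔪 ^ n`
  have hbN : ∀ n N, b n ≤ a N + 𝔪 ^ n := by
    intro n N
    have h1 := hφ n (max (φ n) N) (le_max_left _ _)
    calc b n = a (max (φ n) N) + 𝔪 ^ n := h1.symm
      _ ≤ a N + 𝔪 ^ n := add_le_add_left (ha (le_max_right _ _)) _
  have hble : ∀ n, a (φ n) ≤ b n := fun n => by
    show a (φ n) ≤ a (φ n) + 𝔪 ^ n
    rw [Ideal.add_eq_sup]; exact le_sup_left
  -- key recursion identity
  have hbb : ∀ n, b (n + 1) + 𝔪 ^ n = b n := by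
    intro n
    set N := max (φ n) (φ (n + 1)) with hN
    have h1 : a N + 𝔪 ^ (n + 1) = b (n + 1) := hφ (n + 1) N (le_max_right _ _)
    have h2 : a N + 𝔪 ^ n = b n := hφ n N (le_max_left _ _)
    rw [← h1, ← h2, add_assoc]
    congr 1
    rw [Ideal.add_eq_sup, sup_eq_right]
    exact Ideal.pow_le_pow_right (Nat.le_succ n)
  -- each `b n` avoids `Ia + 𝔪 ^ ℓ`
  have hbne : ∀ n, ¬ b n ≤ Ia + 𝔪 ^ ℓ := by
    intro n hle
    exact hcon (φ n) (le_trans (hble n) hle)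
  -- step
  have key : ∀ n (r : R), r ∈ b (n + ℓ) → r ∉ Ia + 𝔪 ^ ℓ →
      ∃ s, s ∈ b (n + 1 + ℓ) ∧ s ∉ Ia + 𝔪 ^ ℓ ∧ s - r ∈ 𝔪 ^ (n + ℓ) := by
    intro n r hr hr'
    have hsplit : b (n + ℓ) = b (n + ℓ + 1) + 𝔪 ^ (n + ℓ) := (hbb (n + ℓ)).symm
    rw [hsplit, Ideal.add_eq_sup, Submodule.mem_sup] at hr
    obtain ⟨s, hs, m, hm, rfl⟩ := hr
    refine ⟨s, by rw [show n + 1 + ℓ = n + ℓ + 1 by ring]; exact hs, ?_, by simpa using hm⟩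
    intro hsmem
    apply hr'
    have hmℓ : m ∈ (𝔪 ^ ℓ : Ideal R) := Ideal.pow_le_pow_right (Nat.le_add_left ℓ n) hm
    have : m ∈ Ia + 𝔪 ^ ℓ := (Ideal.add_eq_sup (I := Ia)) ▸ Submodule.mem_sup_right hmℓ
    exact Ideal.add_mem _ hsmem this
  -- base point
  have hbase : ∃ r, r ∈ b ℓ ∧ r ∉ Ia + 𝔪 ^ ℓ := by
    by_contra hh
    push_neg at hh
    exact hbne ℓ fun r hr => hh r hr
  obtain ⟨r0, hr0, hr0'⟩ := hbase
  -- build the Cauchy sequence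
  let g : ∀ n : ℕ, {r : R // r ∈ b (n + ℓ) ∧ r ∉ Ia + 𝔪 ^ ℓ} := fun n =>
    Nat.rec ⟨r0, by simpa using hr0, hr0'⟩
      (fun k prev => ⟨Classical.choose (key k prev.1 prev.2.1 prev.2.2),
        (Classical.choose_spec (key k prev.1 prev.2.1 prev.2.2)).1,
        (Classical.choose_spec (key k prev.1 prev.2.1 prev.2.2)).2.1⟩) n
  set x : ℕ → R := fun n => (g n).1 with hx
  have hstep : ∀ n, x (n + 1) - x n ∈ 𝔪 ^ (n + ℓ) := fun n =>
    (Classical.choose_spec (key n (g n).1 (g n).2.1 (g n).2.2)).2.2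
  have hmem : ∀ n, x n ∈ b (n + ℓ) := fun n => (g n).2.1
  have hnot : ∀ n, x n ∉ Ia + 𝔪 ^ ℓ := fun n => (g n).2.2
  -- Cauchy property
  have hcauchy : ∀ {m n : ℕ}, m ≤ n → x n - x m ∈ (𝔪 ^ m : Ideal R) := by
    intro m n hmn
    induction n, hmn using Nat.le_induction with
    | base => simpa using Ideal.zero_mem _
    | succ k hk ih =>
      have h1 : x (k + 1) - x k ∈ (𝔪 ^ m : Ideal R) :=
        Ideal.pow_le_pow_right (le_trans hk (Nat.le_add_right k ℓ)) (hstep k)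
      have := Ideal.add_mem _ h1 ih
      simpa using this
  -- limit via completeness
  have hsmul : ∀ m : ℕ, (𝔪 ^ m • ⊤ : Submodule R R) = (𝔪 ^ m : Ideal R) := by
    intro m; rw [smul_eq_mul, Ideal.mul_top]
  obtain ⟨L, hL⟩ := IsPrecomplete.prec (IsAdicComplete.toIsPrecomplete (I := 𝔪) (M := R))
    (f := x) (by
      intro m n hmn
      rw [SModEq.sub_mem, hsmul]
      exact (Ideal.neg_mem_iff _).mp (by simpa using hcauchy hmn))
  have hLx : ∀ n, x n - L ∈ (𝔪 ^ n : Ideal R) := by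
    intro n
    have := hL n
    rw [SModEq.sub_mem, hsmul] at this
    exact this
  -- L belongs to every a N
  have hLa : ∀ N, L ∈ a N := by
    intro N
    rw [← aux_closed (a N), Ideal.mem_iInf]
    intro n
    have h1 : x n ∈ a N + 𝔪 ^ n :=
      add_le_add_right (Ideal.pow_le_pow_right (Nat.le_add_right n ℓ)) (a N)
        (hbN (n + ℓ) N (hmem n))
    have h2 : x n - L ∈ a N + 𝔪 ^ n := by
      refine (Ideal.add_eq_sup (I := a N)) ▸ Submodule.mem_sup_right (hLx n)
    have := Ideal.sub_mem _ h1 h2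
    simpa using this
  have hLI : L ∈ Ia := by rw [hIa, Ideal.mem_iInf]; exact hLa
  -- contradiction
  apply hnot ℓ
  have h1 : L ∈ Ia + 𝔪 ^ ℓ := (Ideal.add_eq_sup (I := Ia)) ▸ Submodule.mem_sup_left hLI
  have h2 : x ℓ - L ∈ Ia + 𝔪 ^ ℓ :=
    (Ideal.add_eq_sup (I := Ia)) ▸ Submodule.mem_sup_right (hLx ℓ)
  have := Ideal.add_mem _ h2 h1
  simpa using this

end Aux

open IsLocalRing in
/-- Lemma A.2(i): in a complete Noetherian local ring, for decreasing sequences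
of ideals `(I_N)` and `(J_N)` with intersections `I` and `J`, one has
`I·J = ⋂_N I_N·J_N`. -/
theorem inf_mul_inf_of_decreasing {R : Type*} [CommRing R] [IsNoetherianRing R]
    [IsLocalRing R] [IsAdicComplete (IsLocalRing.maximalIdeal R) R]
    (I J : ℕ → Ideal R)
    (hI : ∀ N, I (N + 1) ≤ I N) (hJ : ∀ N, J (N + 1) ≤ J N) :
    (⨅ N, I N) * (⨅ N, J N) = ⨅ N, I N * J N := by
  have haI : Antitone I := antitone_nat_of_succ_le hI
  have haJ : Antitone J := antitone_nat_of_succ_le hJ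
  set 𝔪 : Ideal R := maximalIdeal R with h𝔪
  set Ii : Ideal R := ⨅ N, I N with hIi
  set Jj : Ideal R := ⨅ N, J N with hJj
  refine le_antisymm (le_iInf fun N => Ideal.mul_mono (iInf_le _ N) (iInf_le _ N)) ?_
  rw [← aux_closed (Ii * Jj)]
  refine le_iInf fun ℓ => ?_
  obtain ⟨N1, hN1⟩ := aux_chevalley I haI ℓ
  obtain ⟨N2, hN2⟩ := aux_chevalley J haJ ℓ
  set N := max N1 N2 with hN
  have hIN : I N ≤ Ii + 𝔪 ^ ℓ := le_trans (haI (le_max_left _ _)) hN1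
  have hJN : J N ≤ Jj + 𝔪 ^ ℓ := le_trans (haJ (le_max_right _ _)) hN2
  calc (⨅ M, I M * J M) ≤ I N * J N := iInf_le _ N
    _ ≤ (Ii + 𝔪 ^ ℓ) * (Jj + 𝔪 ^ ℓ) := Ideal.mul_mono hIN hJN
    _ ≤ Ii * Jj + 𝔪 ^ ℓ := by
        refine Ideal.mul_le.mpr fun r hr s hs => ?_
        rw [Ideal.add_eq_sup, Submodule.mem_sup] at hr hs
        obtain ⟨r1, hr1, r2, hr2, rfl⟩ := hr
        obtain ⟨s1, hs1, s2, hs2, rfl⟩ := hs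
        have hmain : r1 * s1 ∈ Ii * Jj := Ideal.mul_mem_mul hr1 hs1
        have h2 : r1 * s2 ∈ (𝔪 ^ ℓ : Ideal R) := Ideal.mul_mem_left _ _ hs2
        have h3 : r2 * s1 ∈ (𝔪 ^ ℓ : Ideal R) := Ideal.mul_mem_right _ _ hr2
        have h4 : r2 * s2 ∈ (𝔪 ^ ℓ : Ideal R) := Ideal.mul_mem_right _ _ hr2
        have : (r1 + r2) * (s1 + s2)
            = r1 * s1 + (r1 * s2 + (r2 * s1 + r2 * s2)) := by ring
        rw [this, Ideal.add_eq_sup, Submodule.mem_sup]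
        exact ⟨r1 * s1, hmain, _,
          Ideal.add_mem _ h2 (Ideal.add_mem _ h3 h4), rfl⟩
end

section
/- Let (R,𝔪) be a Noetherian local ring that is complete with respect to the 𝔪-adic topology. Let (I_N)_{N≥1} be a sequence of ideals of R with I_{N+1} ⊆ I_N for all N, and set I = ⋂_{N≥1} I_N. Then for every ideal I' of R one has ⋂_{N≥1} (I' + I_N) = I' + I. -/
open IsLocalRing Submodule

attribute [local instance] Ideal.Quotient.field

/-- A f.g. module over a Noetherian local ring killed by a power of the
maximal ideal is Artinian. -/
lemma LemA2.artinian_of_pow_smul_eq_bot {R : Type*} [CommRing R] [IsNoetherianRing R]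
    [IsLocalRing R] :
    ∀ (n : ℕ) (M : Type v) (_ : AddCommGroup M) (_ : Module R M) (_ : Module.Finite R M),
      (maximalIdeal R ^ n • ⊤ : Submodule R M) = ⊥ → IsArtinian R M := by
  intro n
  induction n with
  | zero =>
    intro M _ _ _ h
    rw [pow_zero, Ideal.one_eq_top, top_smul] at h
    have : Subsingleton M := by
      refine subsingleton_of_forall_eq 0 fun x => ?_
      have : x ∈ (⊥ : Submodule R M) := h ▸ Submodule.mem_top
      simpa using this
    exact isArtinian_of_finite
  | succ n ih =>
    intro M _ _ _ h
    set m := maximalIdeal R with hm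
    have hNoeth : IsNoetherian R M := inferInstance
    set N : Submodule R M := m • ⊤ with hN
    have hNfg : Module.Finite R N := Module.Finite.iff_fg.mpr (IsNoetherian.noetherian N)
    have hNbot : (m ^ n • ⊤ : Submodule R N) = ⊥ := by
      rw [eq_bot_iff]
      intro x hx
      have hx' : (x : M) ∈ Submodule.map N.subtype (m ^ n • ⊤) := ⟨x, hx, rfl⟩
      rw [Submodule.map_smul'', Submodule.map_top, Submodule.range_subtype] at hx'
      have hx'' : (x : M) ∈ (m ^ (n + 1) • ⊤ : Submodule R M) := by
        rw [pow_succ, mul_smul]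
        exact hx'
      rw [h] at hx''
      rw [Submodule.mem_bot]
      exact Subtype.ext (by simpa using hx'')
    have hNart : IsArtinian R N := ih N inferInstance inferInstance hNfg hNbot
    -- quotient is a f.d. vector space over the residue field
    set Q := M ⧸ N
    haveI hQfin : Module.Finite (R ⧸ m) Q :=
      Module.Finite.of_restrictScalars_finite R (R ⧸ m) Q
    haveI hQart' : IsArtinian (R ⧸ m) Q := isArtinian_of_fg_of_artinian'
    haveI hQart : IsArtinian R Q := by
      rw [isArtinian_iff]
      have hwf := (isArtinian_iff (R ⧸ m) Q).mp hQart'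
      let g : Submodule R Q → Submodule (R ⧸ m) Q := fun p =>
        { carrier := p
          add_mem' := fun ha hb => p.add_mem ha hb
          zero_mem' := p.zero_mem
          smul_mem' := by rintro ⟨b⟩ x hx; exact p.smul_mem b hx }
      have hg : ∀ {p q : Submodule R Q}, p < q → g p < g q := by
        intro p q hpq
        refine lt_of_le_of_ne (fun x hx => hpq.1 hx) (fun hc => hpq.ne ?_)
        exact SetLike.ext fun x =>
          ⟨fun h => (SetLike.ext_iff.mp hc x).mp h, fun h => (SetLike.ext_iff.mp hc x).mpr h⟩
      exact Subrelation.wf hg (InvImage.wf g hwf)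
    exact isArtinian_of_range_eq_ker N.subtype N.mkQ
      (by rw [Submodule.range_subtype, Submodule.ker_mkQ])

/-- Decreasing chains of ideals containing a power of the maximal ideal stabilize. -/
lemma LemA2.stabilizes {R : Type*} [CommRing R] [IsNoetherianRing R] [IsLocalRing R]
    (n : ℕ) (K : ℕ → Ideal R) (hdec : ∀ N, K (N + 1) ≤ K N)
    (hmK : ∀ N, maximalIdeal R ^ n ≤ K N) :
    ∃ N₀, ∀ N, N₀ ≤ N → K N = K N₀ := by
  set m := maximalIdeal R with hm
  set Q := R ⧸ (m ^ n) with hQ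
  have hmap : ∀ (J : Ideal R), Submodule.map (m ^ n).mkQ J = (J • ⊤ : Submodule R Q) := by
    intro J
    conv_lhs => rw [show (J : Submodule R R) = J • ⊤ from by
      rw [smul_eq_mul, ← Ideal.one_eq_top, mul_one]]
    rw [Submodule.map_smul'', Submodule.map_top, Submodule.range_mkQ]
  have hQbot : (m ^ n • ⊤ : Submodule R Q) = ⊥ := by
    rw [← hmap, eq_bot_iff, Submodule.map_le_iff_le_comap]
    intro x hx
    have hx0 : (m ^ n).mkQ x = 0 := (Submodule.Quotient.mk_eq_zero _).mpr hx
    simpa [Submodule.mem_comap, hx0]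
  have hart : IsArtinian R Q :=
    LemA2.artinian_of_pow_smul_eq_bot n Q inferInstance inferInstance inferInstance hQbot
  have hanti : Antitone K := antitone_nat_of_succ_le hdec
  set f : ℕ →o (Submodule R Q)ᵒᵈ :=
    ⟨fun N => OrderDual.toDual (Submodule.map (m ^ n).mkQ (K N)),
      fun a b hab => Submodule.map_mono (hanti hab)⟩ with hf
  obtain ⟨N₀, hN₀⟩ := IsArtinian.monotone_stabilizes f
  refine ⟨N₀, fun N hN => ?_⟩
  have := hN₀ N hN
  have hmaps : Submodule.map (m ^ n).mkQ (K N₀) = Submodule.map (m ^ n).mkQ (K N) :=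
    congrArg OrderDual.ofDual this
  have h1 : Submodule.comap (m ^ n).mkQ (Submodule.map (m ^ n).mkQ (K N)) = K N :=
    Submodule.comap_map_eq_self (by rw [Submodule.ker_mkQ]; exact hmK N)
  have h2 : Submodule.comap (m ^ n).mkQ (Submodule.map (m ^ n).mkQ (K N₀)) = K N₀ :=
    Submodule.comap_map_eq_self (by rw [Submodule.ker_mkQ]; exact hmK N₀)
  rw [← h1, ← h2, hmaps]

/-- Krull intersection in the quotient: `⋂_ℓ (J + 𝔪^ℓ) = J`. -/
lemma LemA2.iInf_add_pow {R : Type*} [CommRing R] [IsNoetherianRing R] [IsLocalRing R]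
    (J : Ideal R) : (⨅ ℓ : ℕ, (J + maximalIdeal R ^ ℓ)) = J := by
  set m := maximalIdeal R with hm
  refine le_antisymm ?_ (le_iInf fun ℓ => by rw [Submodule.add_eq_sup]; exact le_sup_left)
  intro x hx
  have hbot : (⨅ i : ℕ, m ^ i • ⊤ : Submodule R (R ⧸ J)) = ⊥ :=
    Ideal.iInf_pow_smul_eq_bot_of_isLocalRing (I := m) (M := R ⧸ J)
      (Ideal.IsMaximal.ne_top (maximalIdeal.isMaximal R))
  have hx' : J.mkQ x ∈ (⨅ i : ℕ, m ^ i • ⊤ : Submodule R (R ⧸ J)) := by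
    rw [Submodule.mem_iInf]
    intro i
    have : x ∈ J + m ^ i := (Submodule.mem_iInf _).mp hx i
    rw [Submodule.add_eq_sup, Submodule.mem_sup] at this
    obtain ⟨y, hy, z, hz, rfl⟩ := this
    have hy0 : J.mkQ y = 0 := (Submodule.Quotient.mk_eq_zero _).mpr hy
    have : J.mkQ (y + z) = J.mkQ z := by rw [map_add, hy0, zero_add]
    rw [this]
    have hzmem : J.mkQ z ∈ Submodule.map J.mkQ (m ^ i) := Submodule.mem_map_of_mem hz
    have heq : Submodule.map J.mkQ ((m ^ i : Ideal R) : Submodule R R)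
        = (m ^ i • ⊤ : Submodule R (R ⧸ J)) := by
      conv_lhs => rw [show ((m ^ i : Ideal R) : Submodule R R) = (m ^ i) • ⊤ from by
        rw [smul_eq_mul, ← Ideal.one_eq_top, mul_one]]
      rw [Submodule.map_smul'', Submodule.map_top, Submodule.range_mkQ]
    rwa [heq] at hzmem
  rw [hbot] at hx'
  have : J.mkQ x = 0 := by simpa using hx'
  rwa [← Submodule.Quotient.mk_eq_zero]

/-- Chevalley's theorem: in a complete Noetherian local ring, a decreasing sequence
of ideals with intersection `I` is eventually contained in `I + 𝔪^ℓ`. -/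
lemma LemA2.chevalley {R : Type*} [CommRing R] [IsNoetherianRing R] [IsLocalRing R]
    [IsAdicComplete (maximalIdeal R) R] (I : ℕ → Ideal R) (hI : ∀ N, I (N + 1) ≤ I N)
    (ℓ : ℕ) : ∃ N, I N ≤ (⨅ N, I N) + maximalIdeal R ^ ℓ := by
  by_contra hcon
  push_neg at hcon
  set m := maximalIdeal R with hm
  set Iinf := ⨅ N, I N with hIinf
  have hanti : Antitone I := antitone_nat_of_succ_le hI
  -- stabilization of `I N + m ^ n` in `N`
  have hS : ∀ n : ℕ, ∃ N₀, ∀ N, N₀ ≤ N → I N + m ^ n = I N₀ + m ^ n := by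
    intro n
    obtain ⟨N₀, h⟩ := LemA2.stabilizes n (fun N => I N + m ^ n)
      (fun N => by simp only [Submodule.add_eq_sup]; exact sup_le_sup_right (hI N) _)
      (fun N => by simp only [Submodule.add_eq_sup]; exact le_sup_right)
    exact ⟨N₀, h⟩
  choose S hSspec using hS
  set J : ℕ → Ideal R := fun n => I (S n) + m ^ n with hJ
  have hJle : ∀ n N, J n ≤ I N + m ^ n := by
    intro n N
    rcases le_total (S n) N with h | h
    · exact le_of_eq (hSspec n N h).symm
    · simp only [hJ, Submodule.add_eq_sup]
      exact sup_le_sup_right (hanti h) _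
  have hIJ : ∀ n N, S n ≤ N → I N ≤ J n := by
    intro n N h
    refine le_trans (hanti h) ?_
    simp only [hJ, Submodule.add_eq_sup]
    exact le_sup_left
  -- starting point
  obtain ⟨a0, ha0J, ha0⟩ : ∃ a, a ∈ J ℓ ∧ a ∉ Iinf + m ^ ℓ := by
    obtain ⟨a, haI, ha⟩ := SetLike.not_le_iff_exists.mp (hcon (S ℓ))
    exact ⟨a, hIJ ℓ (S ℓ) le_rfl haI, ha⟩
  -- one refinement step
  have step : ∀ (t : ℕ) (a : R), a ∈ J (ℓ + t) → ∃ b, b ∈ J (ℓ + t + 1) ∧ a - b ∈ m ^ (ℓ + t) := by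
    intro t a ha
    set M := max (S (ℓ + t)) (S (ℓ + t + 1)) with hM
    have h1 : I M + m ^ (ℓ + t) = J (ℓ + t) := hSspec (ℓ + t) M (le_max_left _ _)
    rw [← h1, Submodule.add_eq_sup, Submodule.mem_sup] at ha
    obtain ⟨y, hy, z, hz, rfl⟩ := ha
    refine ⟨y, hIJ (ℓ + t + 1) M (le_max_right _ _) hy, ?_⟩
    simpa using hz
  choose g hg1 hg2 using step
  -- the recursively defined Cauchy sequence
  let c : (t : ℕ) → {a : R // a ∈ J (ℓ + t)} := fun t =>
    Nat.rec ⟨a0, by simpa using ha0J⟩ (fun t p => ⟨g t p.1 p.2, hg1 t p.1 p.2⟩) t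
  have hstep : ∀ t, (c t).1 - (c (t + 1)).1 ∈ m ^ (ℓ + t) := fun t => hg2 t (c t).1 (c t).2
  have hdiff : ∀ t u, t ≤ u → (c t).1 - (c u).1 ∈ m ^ (ℓ + t) := by
    intro t u htu
    induction u, htu using Nat.le_induction with
    | base => simp
    | succ u htu ih =>
      have : (c t).1 - (c (u + 1)).1 = ((c t).1 - (c u).1) + ((c u).1 - (c (u + 1)).1) := by ring
      rw [this]
      exact (m ^ (ℓ + t)).add_mem ih
        (Ideal.pow_le_pow_right (by omega) (hstep u))
  -- converge
  have hsmul : ∀ k : ℕ, (m ^ k • ⊤ : Submodule R R) = m ^ k := by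
    intro k
    rw [smul_eq_mul, ← Ideal.one_eq_top, mul_one]
  obtain ⟨L, hL⟩ := IsPrecomplete.prec (IsAdicComplete.toIsPrecomplete (I := m) (M := R))
    (f := fun t => (c t).1) (by
      intro s t hst
      rw [SModEq.sub_mem, hsmul]
      exact Ideal.pow_le_pow_right (by omega) (hdiff s t hst))
  have hLc : ∀ t, (c t).1 - L ∈ m ^ t := by
    intro t
    have := hL t
    rwa [SModEq.sub_mem, hsmul] at this
  -- L is in the intersection
  have hLinf : L ∈ Iinf := by
    rw [hIinf, Submodule.mem_iInf]
    intro N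
    have : L ∈ ⨅ n : ℕ, (I N + m ^ n) := by
      rw [Submodule.mem_iInf]
      intro n
      have h1 : (c n).1 ∈ I N + m ^ n := by
        have hle : J (ℓ + n) ≤ I N + m ^ n :=
          (hJle (ℓ + n) N).trans (by
            simp only [Submodule.add_eq_sup]
            exact sup_le_sup_left (Ideal.pow_le_pow_right (by omega)) _)
        exact hle (c n).2
      have h2 : (c n).1 - L ∈ I N + m ^ n := by
        rw [Submodule.add_eq_sup]
        exact Submodule.mem_sup_right (hLc n)
      have : L = (c n).1 - ((c n).1 - L) := by ring
      rw [this]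
      exact Submodule.sub_mem _ h1 h2
    rwa [LemA2.iInf_add_pow (I N)] at this
  -- contradiction with the choice of a0
  apply ha0
  have h1 : a0 - L ∈ m ^ ℓ := by
    have h2 : a0 - (c ℓ).1 ∈ m ^ ℓ := by
      have := hdiff 0 ℓ (Nat.zero_le ℓ)
      have h : (c 0).1 - (c ℓ).1 ∈ m ^ ℓ := by simpa using this
      exact h
    have h3 : (c ℓ).1 - L ∈ m ^ ℓ := hLc ℓ
    have : a0 - L = (a0 - (c ℓ).1) + ((c ℓ).1 - L) := by ring
    rw [this]
    exact (m ^ ℓ).add_mem h2 h3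
  have : a0 = L + (a0 - L) := by ring
  rw [this, Submodule.add_eq_sup]
  exact Submodule.add_mem_sup hLinf h1

/-- Lemma A.2(ii): in a complete Noetherian local ring, for a decreasing
sequence of ideals `(I_N)` with intersection `I`, one has
`⋂_N (I' + I_N) = I' + I` for every ideal `I'`. -/
theorem inf_sup_of_decreasing {R : Type*} [CommRing R] [IsNoetherianRing R]
    [IsLocalRing R] [IsAdicComplete (IsLocalRing.maximalIdeal R) R]
    (I : ℕ → Ideal R) (hI : ∀ N, I (N + 1) ≤ I N) (I' : Ideal R) :
    (⨅ N, (I' + I N)) = I' + ⨅ N, I N := by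
  refine le_antisymm ?_ (le_iInf fun N => by
    simp only [Submodule.add_eq_sup]
    exact sup_le_sup_left (iInf_le _ N) _)
  intro x hx
  rw [← LemA2.iInf_add_pow (I' + ⨅ N, I N), Submodule.mem_iInf]
  intro ℓ
  obtain ⟨N, hN⟩ := LemA2.chevalley I hI ℓ
  have hxN : x ∈ I' + I N := (Submodule.mem_iInf _).mp hx N
  have hle : I' + I N ≤ I' + (⨅ N, I N) + maximalIdeal R ^ ℓ := by
    simp only [Submodule.add_eq_sup, sup_assoc]
    exact sup_le_sup_left (hN.trans (le_of_eq (by simp [Submodule.add_eq_sup]))) _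
  exact hle hxN
end

section
/- Let A be a local integral domain with maximal ideal 𝔪, and let R ⊆ A be a subring such that R + 𝔪^n = A for every integer n ≥ 1 (i.e., R is dense in A for the 𝔪-adic topology). Let v be a nonnegative real-valued valuation on A such that inf{v(f) : f ∈ 𝔪, f ≠ 0} > 0. Then for every nonzero f ∈ A there exists a nonzero g ∈ R with v(g) = v(f). Consequently, v and its restriction to R have the same set of values: v(A∖{0}) = v(R∖{0}). -/
/-- Value-group part of Lemma 4.7: let `A` be a local domain with maximal
ideal `𝔪`, `R ⊆ A` a subring dense for the `𝔪`-adic topology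
(`R + 𝔪^n = A` for all `n ≥ 1`), and `v` a nonnegative real-valued valuation
on `A` with `inf{v(f) : f ∈ 𝔪, f ≠ 0} > 0`. Then every value of `v` on a
nonzero element of `A` is attained on a nonzero element of `R`; consequently
`v(A∖{0}) = v(R∖{0})`. -/
theorem valuation_values_eq_of_dense_subring {A : Type*} [CommRing A]
    [IsDomain A] [IsLocalRing A] (R : Subring A)
    (hdense : ∀ n : ℕ, 1 ≤ n → ∀ a : A, ∃ r ∈ R,
      a - r ∈ (IsLocalRing.maximalIdeal A) ^ n)
    (v : A → ℝ)
    (hmul : ∀ f g : A, f ≠ 0 → g ≠ 0 → v (f * g) = v f + v g)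
    (hadd : ∀ f g : A, f ≠ 0 → g ≠ 0 → f + g ≠ 0 → min (v f) (v g) ≤ v (f + g))
    (hnonneg : ∀ f : A, f ≠ 0 → 0 ≤ v f)
    (hpos : ∃ c : ℝ, 0 < c ∧ ∀ f ∈ IsLocalRing.maximalIdeal A, f ≠ 0 → c ≤ v f) :
    (∀ f : A, f ≠ 0 → ∃ g : A, g ∈ R ∧ g ≠ 0 ∧ v g = v f) ∧
      v '' {a : A | a ≠ 0} = v '' {a : A | a ≠ 0 ∧ a ∈ R} := by
  obtain ⟨c, hc, hcv⟩ := hpos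
  -- v 1 = 0
  have h1 : v 1 = 0 := by
    have := hmul 1 1 one_ne_zero one_ne_zero
    simp at this; linarith
  have hneg1 : v (-1 : A) = 0 := by
    have := hmul (-1) (-1) (by simp) (by simp)
    simp [h1] at this; linarith
  have hneg : ∀ x : A, x ≠ 0 → v (-x) = v x := by
    intro x hx
    have := hmul (-1) x (by simp) hx
    simpa [hneg1] using this
  -- values on powers of the maximal ideal
  have hpow : ∀ n : ℕ, ∀ x ∈ (IsLocalRing.maximalIdeal A) ^ n, x ≠ 0 → (n : ℝ) * c ≤ v x := by
    intro n
    induction n with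
    | zero => intro x _ hx; simpa using hnonneg x hx
    | succ n ih =>
      intro x hxmem
      rw [pow_succ] at hxmem
      refine Submodule.mul_induction_on hxmem ?_ ?_
      · intro a ha b hb hab
        have ha0 : a ≠ 0 := fun h => hab (by simp [h])
        have hb0 : b ≠ 0 := fun h => hab (by simp [h])
        rw [hmul a b ha0 hb0]
        have h1 := ih a ha ha0
        have h2 := hcv b hb hb0
        push_cast
        linarith
      · intro x y hx hy hxy
        by_cases hx0 : x = 0
        · subst hx0; simpa using hy (by simpa using hxy)
        by_cases hy0 : y = 0
        · subst hy0; simpa using hx (by simpa using hxy)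
        have := hadd x y hx0 hy0 hxy
        have := le_min (hx hx0) (hy hy0)
        linarith
  have main : ∀ f : A, f ≠ 0 → ∃ g : A, g ∈ R ∧ g ≠ 0 ∧ v g = v f := by
    intro f hf
    obtain ⟨n, hn⟩ := exists_nat_gt (v f / c)
    have hvf : v f < (n + 1 : ℕ) * c := by
      have : v f < n * c := by
        rw [div_lt_iff₀ hc] at hn; linarith
      push_cast
      nlinarith
    obtain ⟨r, hrR, hrm⟩ := hdense (n + 1) (by omega) f
    by_cases hfr : f - r = 0
    · exact ⟨r, hrR, by rw [sub_eq_zero] at hfr; rw [← hfr]; exact hf,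
        by rw [sub_eq_zero] at hfr; rw [hfr]⟩
    · have hvm : v f < v (f - r) := lt_of_lt_of_le hvf (hpow (n + 1) _ hrm hfr)
      have hr0 : r ≠ 0 := by
        intro h; subst h
        simp only [sub_zero] at hvm
        exact lt_irrefl _ hvm
      refine ⟨r, hrR, hr0, ?_⟩
      -- r = f + (-(f - r)), f = r + (f - r)
      have hv1 : v f ≤ v r := by
        have h := hadd f (-(f - r)) hf (neg_ne_zero.mpr hfr) (by ring_nf; simpa using hr0)
        rw [hneg _ hfr] at h
        have : f + -(f - r) = r := by ring
        rw [this] at h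
        calc v f = min (v f) (v (f - r)) := (min_eq_left hvm.le).symm
          _ ≤ v r := h
      have hv2 : v r ≤ v f := by
        by_contra hlt
        push_neg at hlt
        have h := hadd r (f - r) hr0 hfr (by simpa using hf)
        have heq : r + (f - r) = f := by ring
        rw [heq] at h
        have : v f < min (v r) (v (f - r)) := lt_min hlt hvm
        linarith
      linarith
  refine ⟨main, ?_⟩
  ext x
  simp only [Set.mem_image, Set.mem_setOf_eq]
  constructor
  · rintro ⟨a, ha, rfl⟩
    obtain ⟨g, hgR, hg0, hgv⟩ := main a ha
    exact ⟨g, ⟨hg0, hgR⟩, hgv⟩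
  · rintro ⟨a, ⟨ha, _⟩, rfl⟩
    exact ⟨a, ha, rfl⟩
end

section
/- Let k be a field, n ≥ 1, and let 𝔞_• = (𝔞_m)_{m≥1} be a graded sequence of monomial ideals in k[x_1,…,x_n]. Then for every α ∈ ℝ_{≥0}^n: val_α(𝔞_•) = inf{⟨u,α⟩ : u ∈ P(𝔞_•)}. -/
/-- `val_α(f) = min{⟨α,u⟩ : the coefficient of x^u in f is nonzero}`. -/
noncomputable def polyVal {k : Type*} [Field k] {n : ℕ} (α : Fin n → ℝ)
    (f : MvPolynomial (Fin n) k) : ℝ :=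
  sInf {x : ℝ | ∃ u ∈ f.support, x = ∑ i, α i * (u i : ℝ)}

/-- `val_α(𝔞) = inf{val_α(f) : f ∈ 𝔞, f ≠ 0}`. -/
noncomputable def idealVal {k : Type*} [Field k] {n : ℕ} (α : Fin n → ℝ)
    (𝔞 : Ideal (MvPolynomial (Fin n) k)) : ℝ :=
  sInf {x : ℝ | ∃ f ∈ 𝔞, f ≠ 0 ∧ x = polyVal α f}

/-- A monomial ideal: an ideal generated by monomials `x^u`. -/
def IsMonomialIdeal {k : Type*} [Field k] {n : ℕ}
    (𝔞 : Ideal (MvPolynomial (Fin n) k)) : Prop :=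
  ∃ T : Set (Fin n →₀ ℕ),
    𝔞 = Ideal.span ((fun u : Fin n →₀ ℕ => MvPolynomial.monomial u (1 : k)) '' T)

/-- The Newton polyhedron `P(𝔞)` of a monomial ideal: the convex hull of the
exponent vectors of monomials lying in `𝔞`. -/
def newtonPolyhedron {k : Type*} [Field k] {n : ℕ}
    (𝔞 : Ideal (MvPolynomial (Fin n) k)) : Set (Fin n → ℝ) :=
  convexHull ℝ {u : Fin n → ℝ | ∃ β : Fin n →₀ ℕ,
    MvPolynomial.monomial β (1 : k) ∈ 𝔞 ∧ u = fun i => (β i : ℝ)}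

/-- The convex region `P(𝔞_•)`: the closure of `⋃_m (1/m)·P(𝔞_m)`. -/
def newtonRegion {k : Type*} [Field k] {n : ℕ}
    (𝔞 : ℕ → Ideal (MvPolynomial (Fin n) k)) : Set (Fin n → ℝ) :=
  closure (⋃ (m : ℕ) (_ : 1 ≤ m) (_ : 𝔞 m ≠ ⊥),
    (fun u : Fin n → ℝ => ((m : ℝ))⁻¹ • u) '' newtonPolyhedron (𝔞 m))

/-- `val_α(𝔞_•) = inf{val_α(𝔞_m)/m : m ≥ 1, 𝔞_m ≠ 0}`. -/
noncomputable def seqVal {k : Type*} [Field k] {n : ℕ} (α : Fin n → ℝ)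
    (𝔞 : ℕ → Ideal (MvPolynomial (Fin n) k)) : ℝ :=
  sInf {x : ℝ | ∃ m : ℕ, 1 ≤ m ∧ 𝔞 m ≠ ⊥ ∧ x = idealVal α (𝔞 m) / (m : ℝ)}


open MvPolynomial

section Aux

variable {k : Type*} [Field k] {n : ℕ} (α : Fin n → ℝ)

private lemma polyValSet_eq (f : MvPolynomial (Fin n) k) :
    {x : ℝ | ∃ u ∈ f.support, x = ∑ i, α i * (u i : ℝ)} =
      (fun u : Fin n →₀ ℕ => ∑ i, α i * (u i : ℝ)) '' ↑f.support := by
  ext x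
  simp [eq_comm]

private lemma polyVal_mem {f : MvPolynomial (Fin n) k} (hf : f ≠ 0) :
    ∃ u ∈ f.support, polyVal α f = ∑ i, α i * (u i : ℝ) := by
  have hfin : {x : ℝ | ∃ u ∈ f.support, x = ∑ i, α i * (u i : ℝ)}.Finite := by
    rw [polyValSet_eq]; exact f.support.finite_toSet.image _
  obtain ⟨u, hu⟩ := support_nonempty.mpr hf
  have hne : {x : ℝ | ∃ u ∈ f.support, x = ∑ i, α i * (u i : ℝ)}.Nonempty :=
    ⟨_, u, hu, rfl⟩
  exact hne.csInf_mem hfin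

private lemma polyVal_le {f : MvPolynomial (Fin n) k} {u : Fin n →₀ ℕ} (hu : u ∈ f.support) :
    polyVal α f ≤ ∑ i, α i * (u i : ℝ) := by
  have hfin : {x : ℝ | ∃ u ∈ f.support, x = ∑ i, α i * (u i : ℝ)}.Finite := by
    rw [polyValSet_eq]; exact f.support.finite_toSet.image _
  exact csInf_le hfin.bddBelow ⟨u, hu, rfl⟩

private lemma dot_nonneg (hα : ∀ i, 0 ≤ α i) (u : Fin n →₀ ℕ) :
    0 ≤ ∑ i, α i * (u i : ℝ) :=
  Finset.sum_nonneg fun i _ => mul_nonneg (hα i) (Nat.cast_nonneg _)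

private lemma polyVal_nonneg (hα : ∀ i, 0 ≤ α i) {f : MvPolynomial (Fin n) k} (hf : f ≠ 0) :
    0 ≤ polyVal α f := by
  obtain ⟨u, _, hu⟩ := polyVal_mem α hf
  rw [hu]; exact dot_nonneg α hα u

private lemma polyVal_monomial (β : Fin n →₀ ℕ) :
    polyVal α (monomial β (1 : k)) = ∑ i, α i * (β i : ℝ) := by
  classical
  unfold polyVal
  rw [support_monomial, if_neg one_ne_zero]
  have : {x : ℝ | ∃ u ∈ ({β} : Finset (Fin n →₀ ℕ)), x = ∑ i, α i * (u i : ℝ)} =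
      {∑ i, α i * (β i : ℝ)} := by ext x; simp
  rw [this, csInf_singleton]

private lemma exists_monomial_mem {𝔞 : Ideal (MvPolynomial (Fin n) k)}
    (h : IsMonomialIdeal 𝔞) (hne : 𝔞 ≠ ⊥) :
    ∃ β : Fin n →₀ ℕ, monomial β (1 : k) ∈ 𝔞 := by
  obtain ⟨T, rfl⟩ := h
  rcases T.eq_empty_or_nonempty with h | ⟨t, ht⟩
  · subst h
    simp only [Set.image_empty, Ideal.span_empty] at hne
    exact absurd rfl hne
  · exact ⟨t, Ideal.subset_span ⟨t, ht, rfl⟩⟩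

private lemma idealVal_nonneg (hα : ∀ i, 0 ≤ α i) {𝔞 : Ideal (MvPolynomial (Fin n) k)}
    (hne : 𝔞 ≠ ⊥) : 0 ≤ idealVal α 𝔞 := by
  obtain ⟨f, hf, hf0⟩ := Submodule.exists_mem_ne_zero_of_ne_bot hne
  exact le_csInf ⟨_, f, hf, hf0, rfl⟩ (by rintro x ⟨g, hg, hg0, rfl⟩; exact polyVal_nonneg α hα hg0)

private lemma idealVal_eq (hα : ∀ i, 0 ≤ α i) {𝔞 : Ideal (MvPolynomial (Fin n) k)}
    (hm : IsMonomialIdeal 𝔞) (hne : 𝔞 ≠ ⊥) :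
    idealVal α 𝔞 = sInf {x : ℝ | ∃ β : Fin n →₀ ℕ,
      monomial β (1 : k) ∈ 𝔞 ∧ x = ∑ i, α i * (β i : ℝ)} := by
  set M := {x : ℝ | ∃ β : Fin n →₀ ℕ, monomial β (1 : k) ∈ 𝔞 ∧ x = ∑ i, α i * (β i : ℝ)}
  set I := {x : ℝ | ∃ f ∈ 𝔞, f ≠ 0 ∧ x = polyVal α f}
  have hMI : M ⊆ I := by
    rintro x ⟨β, hβ, rfl⟩
    exact ⟨monomial β 1, hβ, fun h => one_ne_zero (monomial_eq_zero.mp h), (polyVal_monomial α β).symm⟩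
  have hI0 : ∀ x ∈ I, 0 ≤ x := by
    rintro x ⟨g, hg, hg0, rfl⟩; exact polyVal_nonneg α hα hg0
  have hM0 : ∀ x ∈ M, 0 ≤ x := fun x hx => hI0 x (hMI hx)
  obtain ⟨β₀, hβ₀⟩ := exists_monomial_mem hm hne
  have hMne : M.Nonempty := ⟨_, β₀, hβ₀, rfl⟩
  have hbddI : BddBelow I := ⟨0, hI0⟩
  have hbddM : BddBelow M := ⟨0, hM0⟩
  apply le_antisymm
  · exact csInf_le_csInf hbddI hMne hMI
  · refine le_csInf (hMne.mono hMI) ?_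
    rintro x ⟨f, hf, hf0, rfl⟩
    obtain ⟨u, hu, hval⟩ := polyVal_mem α hf0
    obtain ⟨T, rfl⟩ := hm
    obtain ⟨s, hsT, hsu⟩ := mem_ideal_span_monomial_image.mp hf u hu
    have hs𝔞 : monomial s (1 : k) ∈ Ideal.span ((fun u : Fin n →₀ ℕ =>
        monomial u (1 : k)) '' T) := Ideal.subset_span ⟨s, hsT, rfl⟩
    have h1 : sInf M ≤ ∑ i, α i * (s i : ℝ) := csInf_le hbddM ⟨s, hs𝔞, rfl⟩
    have h2 : (∑ i, α i * (s i : ℝ)) ≤ ∑ i, α i * (u i : ℝ) := by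
      refine Finset.sum_le_sum fun i _ => mul_le_mul_of_nonneg_left ?_ (hα i)
      exact_mod_cast hsu i
    rw [hval]; exact h1.trans h2

end Aux

section Main

variable {k : Type*} [Field k] {n : ℕ} (α : Fin n → ℝ)

private lemma seqVal_eq_sInf_V (hα : ∀ i, 0 ≤ α i)
    (𝔞 : ℕ → Ideal (MvPolynomial (Fin n) k))
    (hmono : ∀ m : ℕ, 1 ≤ m → IsMonomialIdeal (𝔞 m))
    (hnz : ∃ m : ℕ, 1 ≤ m ∧ 𝔞 m ≠ ⊥) :
    seqVal α 𝔞 = sInf {x : ℝ | ∃ m : ℕ, 1 ≤ m ∧ ∃ β : Fin n →₀ ℕ,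
      monomial β (1 : k) ∈ 𝔞 m ∧ x = (∑ i, α i * (β i : ℝ)) / (m : ℝ)} := by
  set V := {x : ℝ | ∃ m : ℕ, 1 ≤ m ∧ ∃ β : Fin n →₀ ℕ,
      monomial β (1 : k) ∈ 𝔞 m ∧ x = (∑ i, α i * (β i : ℝ)) / (m : ℝ)} with hV
  set W := {x : ℝ | ∃ m : ℕ, 1 ≤ m ∧ 𝔞 m ≠ ⊥ ∧ x = idealVal α (𝔞 m) / (m : ℝ)} with hW
  obtain ⟨m₀, hm₀, hm₀nz⟩ := hnz
  obtain ⟨β₀, hβ₀⟩ := exists_monomial_mem (hmono m₀ hm₀) hm₀nz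
  have hWne : W.Nonempty := ⟨_, m₀, hm₀, hm₀nz, rfl⟩
  have hVne : V.Nonempty := ⟨_, m₀, hm₀, β₀, hβ₀, rfl⟩
  have hV0 : ∀ x ∈ V, 0 ≤ x := by
    rintro x ⟨m, hm, β, hβ, rfl⟩
    exact div_nonneg (dot_nonneg α hα β) (Nat.cast_nonneg m)
  have hW0 : ∀ x ∈ W, 0 ≤ x := by
    rintro x ⟨m, hm, hmnz, rfl⟩
    exact div_nonneg (idealVal_nonneg α hα hmnz) (Nat.cast_nonneg m)
  have hbddV : BddBelow V := ⟨0, hV0⟩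
  have hbddW : BddBelow W := ⟨0, hW0⟩
  show sInf W = sInf V
  apply le_antisymm
  · refine le_csInf hVne ?_
    rintro x ⟨m, hm, β, hβ, rfl⟩
    have hmnz : 𝔞 m ≠ ⊥ := fun h => by
      rw [h, Ideal.mem_bot] at hβ
      exact one_ne_zero (monomial_eq_zero.mp hβ)
    have h1 : sInf W ≤ idealVal α (𝔞 m) / (m : ℝ) := csInf_le hbddW ⟨m, hm, hmnz, rfl⟩
    refine h1.trans ?_
    have hmpos : (0 : ℝ) < m := by exact_mod_cast hm
    have h2 : idealVal α (𝔞 m) ≤ ∑ i, α i * (β i : ℝ) := by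
      rw [idealVal_eq α hα (hmono m hm) hmnz]
      have hM0 : ∀ x ∈ {x : ℝ | ∃ β : Fin n →₀ ℕ,
          monomial β (1 : k) ∈ 𝔞 m ∧ x = ∑ i, α i * (β i : ℝ)}, 0 ≤ x := by
        rintro x ⟨γ, _, rfl⟩; exact dot_nonneg α hα γ
      exact csInf_le ⟨0, hM0⟩ ⟨β, hβ, rfl⟩
    exact div_le_div_of_nonneg_right h2 hmpos.le
  · refine le_csInf hWne ?_
    rintro x ⟨m, hm, hmnz, rfl⟩
    have hmpos : (0 : ℝ) < m := by exact_mod_cast hm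
    rw [idealVal_eq α hα (hmono m hm) hmnz, le_div_iff₀ hmpos]
    obtain ⟨γ₀, hγ₀⟩ := exists_monomial_mem (hmono m hm) hmnz
    refine le_csInf ⟨_, γ₀, hγ₀, rfl⟩ ?_
    rintro b ⟨β, hβ, rfl⟩
    have : sInf V ≤ (∑ i, α i * (β i : ℝ)) / (m : ℝ) :=
      csInf_le hbddV ⟨m, hm, β, hβ, rfl⟩
    exact (le_div_iff₀ hmpos).mp this

end Main

/-- First assertion of Lemma 8.2: for a graded sequence of monomial ideals
`𝔞_•` in `k[x_1,…,x_n]` and `α ∈ ℝ_{≥0}^n`,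
`val_α(𝔞_•) = inf{⟨u,α⟩ : u ∈ P(𝔞_•)}`. -/
theorem seqVal_eq_inf_newtonRegion {k : Type*} [Field k] {n : ℕ} (hn : 1 ≤ n)
    (𝔞 : ℕ → Ideal (MvPolynomial (Fin n) k))
    (hmono : ∀ m : ℕ, 1 ≤ m → IsMonomialIdeal (𝔞 m))
    (hgraded : ∀ p q : ℕ, 1 ≤ p → 1 ≤ q → 𝔞 p * 𝔞 q ≤ 𝔞 (p + q))
    (hnz : ∃ m : ℕ, 1 ≤ m ∧ 𝔞 m ≠ ⊥)
    (α : Fin n → ℝ) (hα : ∀ i, 0 ≤ α i) :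
    seqVal α 𝔞 = sInf {x : ℝ | ∃ u ∈ newtonRegion 𝔞, x = ∑ i, u i * α i} := by
  classical
  set V := {x : ℝ | ∃ m : ℕ, 1 ≤ m ∧ ∃ β : Fin n →₀ ℕ,
      MvPolynomial.monomial β (1 : k) ∈ 𝔞 m ∧ x = (∑ i, α i * (β i : ℝ)) / (m : ℝ)} with hV
  set R := {x : ℝ | ∃ u ∈ newtonRegion 𝔞, x = ∑ i, u i * α i} with hR
  set F : (Fin n → ℝ) → ℝ := fun u => ∑ i, u i * α i with hF
  have hFlin : IsLinearMap ℝ F := by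
    constructor
    · intro u v; simp [hF, add_mul, Finset.sum_add_distrib]
    · intro c u; simp [hF, Finset.mul_sum, mul_assoc]
  have hFcont : Continuous F := by
    apply continuous_finset_sum
    intro i _
    exact (continuous_apply i).mul continuous_const
  obtain ⟨m₀, hm₀, hm₀nz⟩ := hnz
  obtain ⟨β₀, hβ₀⟩ := exists_monomial_mem (hmono m₀ hm₀) hm₀nz
  have hVne : V.Nonempty := ⟨_, m₀, hm₀, β₀, hβ₀, rfl⟩
  have hV0 : ∀ x ∈ V, 0 ≤ x := by
    rintro x ⟨m, hm, β, hβ, rfl⟩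
    exact div_nonneg (dot_nonneg α hα β) (Nat.cast_nonneg m)
  have hbddV : BddBelow V := ⟨0, hV0⟩
  -- V ⊆ R
  have hVR : V ⊆ R := by
    rintro x ⟨m, hm, β, hβ, rfl⟩
    have hmnz : 𝔞 m ≠ ⊥ := fun h => by
      rw [h, Ideal.mem_bot] at hβ
      exact one_ne_zero (MvPolynomial.monomial_eq_zero.mp hβ)
    have hmpos : (0 : ℝ) < m := by exact_mod_cast hm
    refine ⟨(fun u : Fin n → ℝ => ((m : ℝ))⁻¹ • u) (fun i => (β i : ℝ)), ?_, ?_⟩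
    · apply subset_closure
      refine Set.mem_iUnion.mpr ⟨m, Set.mem_iUnion.mpr ⟨hm, Set.mem_iUnion.mpr ⟨hmnz, ?_⟩⟩⟩
      exact ⟨_, subset_convexHull ℝ _ ⟨β, hβ, rfl⟩, rfl⟩
    · rw [div_eq_inv_mul, Finset.mul_sum]
      refine Finset.sum_congr rfl fun i _ => ?_
      simp [mul_comm, mul_assoc, mul_left_comm]
  -- every element of R is ≥ sInf V
  have hkey : ∀ x ∈ R, sInf V ≤ x := by
    rintro x ⟨u, hu, rfl⟩
    have hC : IsClosed (F ⁻¹' Set.Ici (sInf V)) := IsClosed.preimage hFcont isClosed_Ici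
    have hUC : (⋃ (m : ℕ) (_ : 1 ≤ m) (_ : 𝔞 m ≠ ⊥),
        (fun u : Fin n → ℝ => ((m : ℝ))⁻¹ • u) '' newtonPolyhedron (𝔞 m)) ⊆
        F ⁻¹' Set.Ici (sInf V) := by
      intro w hw
      obtain ⟨m, hw⟩ := Set.mem_iUnion.mp hw
      obtain ⟨hm, hw⟩ := Set.mem_iUnion.mp hw
      obtain ⟨hmnz, hw⟩ := Set.mem_iUnion.mp hw
      obtain ⟨v, hv, rfl⟩ := hw
      have hmpos : (0 : ℝ) < m := by exact_mod_cast hm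
      -- v ∈ convexHull of generators; on generators, F ≥ m * sInf V
      have hhalf : Convex ℝ {w : Fin n → ℝ | (m : ℝ) * sInf V ≤ F w} :=
        convex_halfSpace_ge hFlin _
      have hgen : {u : Fin n → ℝ | ∃ β : Fin n →₀ ℕ,
          MvPolynomial.monomial β (1 : k) ∈ 𝔞 m ∧ u = fun i => (β i : ℝ)} ⊆
          {w : Fin n → ℝ | (m : ℝ) * sInf V ≤ F w} := by
        rintro _ ⟨β, hβ, rfl⟩
        have hmem : (∑ i, α i * (β i : ℝ)) / (m : ℝ) ∈ V := ⟨m, hm, β, hβ, rfl⟩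
        have h1 : sInf V ≤ (∑ i, α i * (β i : ℝ)) / (m : ℝ) := csInf_le hbddV hmem
        have h2 : sInf V * (m : ℝ) ≤ ∑ i, α i * (β i : ℝ) := (le_div_iff₀ hmpos).mp h1
        have h3 : F (fun i => (β i : ℝ)) = ∑ i, α i * (β i : ℝ) := by
          simp [hF, mul_comm]
        rw [Set.mem_setOf_eq, h3, mul_comm]
        exact h2
      have hvH : (m : ℝ) * sInf V ≤ F v :=
        convexHull_min hgen hhalf hv
      have hFsmul : F (((m : ℝ))⁻¹ • v) = ((m : ℝ))⁻¹ * F v := hFlin.map_smul _ _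
      rw [Set.mem_preimage, Set.mem_Ici, hFsmul]
      calc sInf V = ((m : ℝ))⁻¹ * ((m : ℝ) * sInf V) := by
            field_simp
        _ ≤ ((m : ℝ))⁻¹ * F v :=
            mul_le_mul_of_nonneg_left hvH (inv_nonneg.mpr hmpos.le)
    have : u ∈ F ⁻¹' Set.Ici (sInf V) :=
      closure_minimal hUC hC hu
    exact this
  have hRne : R.Nonempty := hVne.mono hVR
  rw [seqVal_eq_sInf_V α hα 𝔞 hmono ⟨m₀, hm₀, hm₀nz⟩]
  apply le_antisymm
  · exact le_csInf hRne hkey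
  · exact csInf_le_csInf ⟨sInf V, hkey⟩ hVne hVR
end

section
/- For all real numbers a, b with 0 < a ≤ b, one has (2√(ab) − a)/(a + b) ≤ (√5 − 1)/2, with equality if and only if 2a = (3 − √5)·b. In particular, the supremum of (2√(ab) − a)/(a + b) over all 0 < a ≤ b equals (√5 − 1)/2, and it is attained exactly along the ray (a,b) = q·(1 − λ, 1), q > 0, where λ = (√5 − 1)/2. -/
private lemma key_lemma (a b : ℝ) (ha : 0 < a) (hb : 0 < b) :
    2 * Real.sqrt (a * b) - a ≤ (Real.sqrt 5 - 1) / 2 * (a + b) ∧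
    (2 * Real.sqrt (a * b) - a = (Real.sqrt 5 - 1) / 2 * (a + b) ↔
      2 * a = (3 - Real.sqrt 5) * b) := by
  set s := Real.sqrt 5 with hsdef
  have hs : s ^ 2 = 5 := Real.sq_sqrt (by norm_num)
  have hs0 : 0 ≤ s := Real.sqrt_nonneg 5
  have hs2 : 2 < s := by nlinarith
  have hs3 : s < 3 := by nlinarith
  set l : ℝ := (s - 1) / 2 with hldef
  have hl : 0 < l := by simp only [hldef]; linarith
  have h1l : 0 < 1 + l := by linarith
  have hll : l * (1 + l) = 1 := by simp only [hldef]; nlinarith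
  set u := Real.sqrt ((1 + l) * a) with hudef
  set v := Real.sqrt (l * b) with hvdef
  have hu0 : 0 ≤ u := Real.sqrt_nonneg _
  have hv0 : 0 ≤ v := Real.sqrt_nonneg _
  have hu2 : u ^ 2 = (1 + l) * a := Real.sq_sqrt (by positivity)
  have hv2 : v ^ 2 = l * b := Real.sq_sqrt (by positivity)
  have harg : (1 + l) * a * (l * b) = a * b := by linear_combination a * b * hll
  have huv : u * v = Real.sqrt (a * b) := by
    rw [hudef, hvdef, ← Real.sqrt_mul (by positivity), harg]
  constructor
  · nlinarith [sq_nonneg (u - v)]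
  · constructor
    · intro h
      have h2 : 2 * (u * v) = u ^ 2 + v ^ 2 := by
        rw [huv, hu2, hv2]; linarith [h]
      have hsq : (u - v) ^ 2 = 0 := by nlinarith [sq_nonneg (u - v)]
      have huvv : u = v := sub_eq_zero.mp (sq_eq_zero_iff.mp hsq)
      have h3 : (1 + l) * a = l * b := by rw [← hu2, ← hv2, huvv]
      simp only [hldef] at h3
      linear_combination (s - 1) * h3 + (b - a) / 2 * hs
    · intro h
      have h3 : (1 + l) * a = l * b := by
        simp only [hldef]
        linear_combination (s + 1) / 4 * h - b / 4 * hs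
      have huvv : u = v := by rw [hudef, hvdef, h3]
      have : Real.sqrt (a * b) = u * v := huv.symm
      rw [this, huvv]
      linear_combination 2 * hv2 - h3

/-- Example 8.5: for `0 < a ≤ b` one has
`(2√(ab) − a)/(a + b) ≤ (√5 − 1)/2`, with equality iff `2a = (3 − √5)b`;
the supremum over all such `a, b` equals `(√5 − 1)/2` and is attained exactly
along the ray `(a,b) = q(1 − λ, 1)`, `q > 0`, where `λ = (√5 − 1)/2`. -/
theorem arnold_mult_golden_ratio :
    (∀ a b : ℝ, 0 < a → a ≤ b →
      (2 * Real.sqrt (a * b) - a) / (a + b) ≤ (Real.sqrt 5 - 1) / 2 ∧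
      ((2 * Real.sqrt (a * b) - a) / (a + b) = (Real.sqrt 5 - 1) / 2 ↔
        2 * a = (3 - Real.sqrt 5) * b)) ∧
    IsGreatest {t : ℝ | ∃ a b : ℝ, 0 < a ∧ a ≤ b ∧
        t = (2 * Real.sqrt (a * b) - a) / (a + b)} ((Real.sqrt 5 - 1) / 2) ∧
    (∀ a b : ℝ, 0 < a → a ≤ b →
      ((2 * Real.sqrt (a * b) - a) / (a + b) = (Real.sqrt 5 - 1) / 2 ↔
        ∃ q : ℝ, 0 < q ∧ a = q * (1 - (Real.sqrt 5 - 1) / 2) ∧ b = q)) := by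
  have hs : Real.sqrt 5 ^ 2 = 5 := Real.sq_sqrt (by norm_num)
  have hs0 : 0 ≤ Real.sqrt 5 := Real.sqrt_nonneg 5
  have hs2 : 2 < Real.sqrt 5 := by nlinarith
  have hs3 : Real.sqrt 5 < 3 := by nlinarith
  have main : ∀ a b : ℝ, 0 < a → a ≤ b →
      (2 * Real.sqrt (a * b) - a) / (a + b) ≤ (Real.sqrt 5 - 1) / 2 ∧
      ((2 * Real.sqrt (a * b) - a) / (a + b) = (Real.sqrt 5 - 1) / 2 ↔
        2 * a = (3 - Real.sqrt 5) * b) := by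
    intro a b ha hab
    have hb : 0 < b := lt_of_lt_of_le ha hab
    have hab2 : 0 < a + b := by linarith
    obtain ⟨h1, h2⟩ := key_lemma a b ha hb
    constructor
    · rw [div_le_iff₀ hab2]; exact h1
    · rw [div_eq_iff (ne_of_gt hab2)]; exact h2
  refine ⟨main, ⟨⟨(3 - Real.sqrt 5) / 2, 1, by linarith, by linarith, ?_⟩, ?_⟩, ?_⟩
  · have h := (main ((3 - Real.sqrt 5) / 2) 1 (by linarith) (by linarith)).2
    exact ((h.mpr (by ring)).symm)
  · rintro t ⟨a, b, ha, hab, rfl⟩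
    exact (main a b ha hab).1
  · intro a b ha hab
    have hb : 0 < b := lt_of_lt_of_le ha hab
    rw [(main a b ha hab).2]
    constructor
    · intro h
      exact ⟨b, hb, by linarith, rfl⟩
    · rintro ⟨q, hq, rfl, rfl⟩
      ring
end
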